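/- arXiv:2305.10583 — 5 statements merged into one kernel-verified Lean document; each statement's English description precedes it below -/
import Mathlib

section
/- Let I = (p_1, …, p_r) be a type and d_k = p_1 + … + p_k. Let (V^(m)) be a sequence in F_I and V ∈ F_I, and choose U^(m), U ∈ O(n) with π_I(U^(m)) = V^(m) and π_I(U) = V. For k = 1,…,r let F_k^(m) (resp. F_k) be the span of columns d_{k−1}+1 through d_k of U^(m) (resp. U), and E_k^(m) = F_1^(m) ⊕ … ⊕ F_k^(m) (resp. E_k). Then V^(m) → V in the quotient topology of F_I if and only if F_k^(m) → F_k in G_{p_k,n} for every k = 1,…,r, if and only if E_k^(m) → E_k in G_{d_k,n} for every k = 1,…,r. -/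
/-!
Statement 0 (Proposition `prop:flagCV`): convergence of fixed-type flags.

A type `I = (p_1, …, p_r)` of `n` is encoded by a map `p : Fin r → ℕ` of positive
integers summing to `n`, with partial sums `d_k = p_1 + … + p_k`.  The block-diagonal
subgroup `O(I) ⊆ O(n)` is encoded via the "cut" predicate determined by the partial
sums, and the flag space `F_I = O(n)/O(I)` is the quotient group with its quotient
topology.  The Grassmannian topology is encoded via orthogonal projectors: a sequence
of subspaces (spanned by orthonormal columns of orthogonal matrices) converges iff the
corresponding projectors converge in the space of matrices.
-/

open Matrix Filter Topology

/-- Same-block relation induced by a set of "cuts": `c k` holds when there is a cut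
between indices `k` and `k+1`. -/
def sameBlock {n : ℕ} (c : Fin n → Prop) (i j : Fin n) : Prop :=
  ∀ k : Fin n, c k → ((i : ℕ) ≤ k ↔ (j : ℕ) ≤ k)

lemma sameBlock.refl {n : ℕ} (c : Fin n → Prop) (i : Fin n) : sameBlock c i i :=
  fun _ _ => Iff.rfl

lemma sameBlock.symm {n : ℕ} {c : Fin n → Prop} {i j : Fin n} (h : sameBlock c i j) :
    sameBlock c j i := fun k hk => (h k hk).symm

lemma sameBlock.trans {n : ℕ} {c : Fin n → Prop} {i j l : Fin n} (h : sameBlock c i j)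
    (h' : sameBlock c j l) : sameBlock c i l := fun k hk => (h k hk).trans (h' k hk)

/-- The real orthogonal group `O(n)`. -/
abbrev OG (n : ℕ) := Matrix.orthogonalGroup (Fin n) ℝ

/-- The block-diagonal subgroup `O(I)` of `O(n)` determined by a cut predicate `c`. -/
def blockSubgroup {n : ℕ} (c : Fin n → Prop) : Subgroup (OG n) where
  carrier := {R | ∀ i j : Fin n, ¬ sameBlock c i j → (R : Matrix (Fin n) (Fin n) ℝ) i j = 0}
  one_mem' := by
    intro i j h
    have hne : i ≠ j := by rintro rfl; exact h (sameBlock.refl c i)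
    simp [Matrix.one_apply, hne]
  mul_mem' := by
    intro A B hA hB i j h
    have : (↑(A * B) : Matrix (Fin n) (Fin n) ℝ) = (A : Matrix (Fin n) (Fin n) ℝ) * B := rfl
    rw [this, Matrix.mul_apply]
    refine Finset.sum_eq_zero fun l _ => ?_
    by_cases hil : sameBlock c i l
    · have : ¬ sameBlock c l j := fun hlj => h (hil.trans hlj)
      rw [hB l j this, mul_zero]
    · rw [hA i l hil, zero_mul]
  inv_mem' := by
    intro A hA i j h
    have : (↑(A⁻¹) : Matrix (Fin n) (Fin n) ℝ) = star (A : Matrix (Fin n) (Fin n) ℝ) :=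
      Matrix.UnitaryGroup.inv_val A
    rw [this, Matrix.star_apply, star_trivial]
    exact hA j i fun hji => h hji.symm

/-- Partial sums `d_m = p_1 + … + p_m` of a type `(p_1, …, p_r)`. -/
def dsum {r : ℕ} (p : Fin r → ℕ) (m : ℕ) : ℕ :=
  ∑ l : Fin r, if (l : ℕ) < m then p l else 0

/-- The cut predicate associated with the type `(p_1, …, p_r)`: there is a cut after
(0-based) index `k` iff `k+1` is one of the partial sums `d_m`. -/
def cutOf {n r : ℕ} (p : Fin r → ℕ) : Fin n → Prop :=
  fun k => ∃ m : ℕ, (k : ℕ) + 1 = dsum p m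

/-- The flag space `F_I = O(n)/O(I)` associated with the type `(p_1, …, p_r)`,
with the quotient topology. -/
abbrev flagSpace (n : ℕ) {r : ℕ} (p : Fin r → ℕ) :=
  OG n ⧸ blockSubgroup (n := n) (cutOf p)

/-- The (0-based) indices of the `k`-th block: `d_{k-1} ≤ i < d_k` (1-based paper indices
`d_{k-1}+1, …, d_k`). -/
def blockFinset {n r : ℕ} (p : Fin r → ℕ) (k : Fin r) : Finset (Fin n) :=
  Finset.univ.filter fun i => dsum p k ≤ (i : ℕ) ∧ (i : ℕ) < dsum p ((k : ℕ) + 1)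

/-- The (0-based) indices of the union of the first `k` blocks: `i < d_k`. -/
def cumFinset {n r : ℕ} (p : Fin r → ℕ) (k : Fin r) : Finset (Fin n) :=
  Finset.univ.filter fun i => (i : ℕ) < dsum p ((k : ℕ) + 1)

/-- The orthogonal projector onto the span of the columns of `U` indexed by `s`
(the columns of an orthogonal matrix being orthonormal). -/
def colProj {n : ℕ} (U : OG n) (s : Finset (Fin n)) : Matrix (Fin n) (Fin n) ℝ :=
  Matrix.of fun a b =>
    ∑ i ∈ s, (U : Matrix (Fin n) (Fin n) ℝ) a i * (U : Matrix (Fin n) (Fin n) ℝ) b i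


/-! ### Auxiliary lemmas -/

section Blocks
variable {n r : ℕ} {p : Fin r → ℕ}

lemma dsum_mono (p : Fin r → ℕ) : Monotone (dsum p) := by
  intro a b hab
  refine Finset.sum_le_sum fun l _ => ?_
  by_cases h : (l : ℕ) < a <;> simp [h] <;> split <;> omega

lemma dsum_zero (p : Fin r → ℕ) : dsum p 0 = 0 := by simp [dsum]

lemma dsum_le (hsum : ∑ k, p k = n) (m : ℕ) : dsum p m ≤ n := by
  rw [← hsum]
  exact Finset.sum_le_sum fun l _ => by split <;> omega

lemma dsum_r (hsum : ∑ k, p k = n) : dsum p r = n := by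
  rw [← hsum]
  exact Finset.sum_congr rfl fun l _ => by simp [l.isLt]

lemma mem_blockFinset {k : Fin r} {i : Fin n} :
    i ∈ blockFinset p k ↔ dsum p k ≤ (i : ℕ) ∧ (i : ℕ) < dsum p ((k : ℕ) + 1) := by
  simp [blockFinset]

lemma mem_cumFinset {k : Fin r} {i : Fin n} :
    i ∈ cumFinset p k ↔ (i : ℕ) < dsum p ((k : ℕ) + 1) := by
  simp [cumFinset]

lemma exists_block (hsum : ∑ k, p k = n) (i : Fin n) : ∃ k : Fin r, i ∈ blockFinset p k := by
  have hr : 0 < r := by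
    rcases Nat.eq_zero_or_pos r with h | h
    · subst h
      simp at hsum
      exact absurd i.isLt (by omega)
    · exact h
  have hP : ∃ m, (i : ℕ) < dsum p (m + 1) := ⟨r - 1, by
    have h1 : dsum p (r - 1 + 1) = n := by rw [Nat.sub_add_cancel hr]; exact dsum_r hsum
    omega⟩
  classical
  have hk0 : (i : ℕ) < dsum p (Nat.find hP + 1) := Nat.find_spec hP
  have hk0r : Nat.find hP < r := by
    have hle : Nat.find hP ≤ r - 1 := Nat.find_le (by
      have h1 : dsum p (r - 1 + 1) = n := by rw [Nat.sub_add_cancel hr]; exact dsum_r hsum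
      omega)
    omega
  refine ⟨⟨Nat.find hP, hk0r⟩, mem_blockFinset.mpr ⟨?_, hk0⟩⟩
  show dsum p (Nat.find hP) ≤ (i : ℕ)
  rcases Nat.eq_zero_or_pos (Nat.find hP) with h0 | h0
  · rw [h0, dsum_zero]; omega
  · have hmin := Nat.find_min hP (m := Nat.find hP - 1) (by omega)
    have heq : Nat.find hP - 1 + 1 = Nat.find hP := by omega
    rw [heq] at hmin
    omega

lemma block_eq_of_mem (hsum : ∑ k, p k = n) {k k' : Fin r} {i : Fin n}
    (h : i ∈ blockFinset p k) (h' : i ∈ blockFinset p k') : k = k' := by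
  rw [mem_blockFinset] at h h'
  by_contra hne
  rcases lt_or_gt_of_ne (fun h : (k : ℕ) = k' => hne (Fin.ext h)) with hlt | hlt
  · have := dsum_mono p (show (k : ℕ) + 1 ≤ k' by omega)
    omega
  · have := dsum_mono p (show (k' : ℕ) + 1 ≤ k by omega)
    omega

lemma sameBlock_of_mem_block {k : Fin r} {i j : Fin n}
    (hi : i ∈ blockFinset p k) (hj : j ∈ blockFinset p k) : sameBlock (cutOf p) i j := by
  rw [mem_blockFinset] at hi hj
  rintro c ⟨m, hm⟩
  rcases le_or_gt m (k : ℕ) with h | h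
  · have := dsum_mono p h
    constructor <;> intro <;> omega
  · have := dsum_mono p (show (k : ℕ) + 1 ≤ m by omega)
    constructor <;> intro <;> omega

lemma not_sameBlock (hsum : ∑ k, p k = n) {k k' : Fin r} {i j : Fin n}
    (hi : i ∈ blockFinset p k) (hj : j ∈ blockFinset p k') (hne : k ≠ k') :
    ¬ sameBlock (cutOf p) i j := by
  intro hsb
  rw [mem_blockFinset] at hi hj
  rcases lt_or_gt_of_ne (fun h : (k : ℕ) = k' => hne (Fin.ext h)) with hlt | hlt
  · have h1 : dsum p ((k : ℕ) + 1) ≤ dsum p (k' : ℕ) := dsum_mono p (by omega)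
    have h2 : dsum p ((k : ℕ) + 1) ≤ n := dsum_le hsum _
    have hc : dsum p ((k : ℕ) + 1) - 1 < n := by omega
    have := hsb ⟨dsum p ((k : ℕ) + 1) - 1, hc⟩ ⟨(k : ℕ) + 1, by simp; omega⟩
    simp at this
    omega
  · have h1 : dsum p ((k' : ℕ) + 1) ≤ dsum p (k : ℕ) := dsum_mono p (by omega)
    have h2 : dsum p ((k' : ℕ) + 1) ≤ n := dsum_le hsum _
    have hc : dsum p ((k' : ℕ) + 1) - 1 < n := by omega
    have := hsb ⟨dsum p ((k' : ℕ) + 1) - 1, hc⟩ ⟨(k' : ℕ) + 1, by simp; omega⟩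
    simp at this
    omega

lemma blockFinset_saturated (hsum : ∑ k, p k = n) {k : Fin r} {i j : Fin n}
    (hsb : sameBlock (cutOf p) i j) (hi : i ∈ blockFinset p k) : j ∈ blockFinset p k := by
  obtain ⟨k', hk'⟩ := exists_block hsum j
  rcases eq_or_ne k k' with rfl | hne
  · exact hk'
  · exact absurd hsb (not_sameBlock hsum hi hk' hne)

lemma cumFinset_saturated (hsum : ∑ k, p k = n) {k : Fin r} {i j : Fin n}
    (hsb : sameBlock (cutOf p) i j) (hi : i ∈ cumFinset p k) : j ∈ cumFinset p k := by
  rw [mem_cumFinset] at hi ⊢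
  have h2 : dsum p ((k : ℕ) + 1) ≤ n := dsum_le hsum _
  have hc : dsum p ((k : ℕ) + 1) - 1 < n := by omega
  have := hsb ⟨dsum p ((k : ℕ) + 1) - 1, hc⟩ ⟨(k : ℕ) + 1, by simp; omega⟩
  simp at this
  omega

end Blocks

section MA
variable {n : ℕ}

noncomputable def diagIdx (s : Finset (Fin n)) : Matrix (Fin n) (Fin n) ℝ :=
  Matrix.diagonal fun i => if i ∈ s then 1 else 0

lemma star_eq_transpose (A : Matrix (Fin n) (Fin n) ℝ) : star A = Aᵀ := by
  ext i j
  simp [Matrix.star_apply]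

lemma OG.transpose_mul_self (U : OG n) :
    (U : Matrix (Fin n) (Fin n) ℝ)ᵀ * (U : Matrix (Fin n) (Fin n) ℝ) = 1 := by
  rw [← star_eq_transpose]
  exact (Unitary.mem_iff.mp U.2).1

lemma OG.mul_self_transpose (U : OG n) :
    (U : Matrix (Fin n) (Fin n) ℝ) * (U : Matrix (Fin n) (Fin n) ℝ)ᵀ = 1 := by
  rw [← star_eq_transpose]
  exact (Unitary.mem_iff.mp U.2).2

lemma colProj_eq (U : OG n) (s : Finset (Fin n)) :
    colProj U s = (U : Matrix (Fin n) (Fin n) ℝ) * diagIdx s * (U : Matrix (Fin n) (Fin n) ℝ)ᵀ := by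
  ext a b
  rw [colProj, Matrix.of_apply, Matrix.mul_apply]
  simp only [diagIdx, Matrix.mul_diagonal, Matrix.transpose_apply]
  symm
  have hc : ∀ x ∈ Finset.univ, ((U : Matrix (Fin n) (Fin n) ℝ) a x * if x ∈ s then (1:ℝ) else 0) *
      (U : Matrix (Fin n) (Fin n) ℝ) b x
      = if x ∈ s then (U : Matrix (Fin n) (Fin n) ℝ) a x * (U : Matrix (Fin n) (Fin n) ℝ) b x
        else 0 := fun x _ => by split <;> ring
  rw [Finset.sum_congr rfl hc, Finset.sum_ite_mem, Finset.univ_inter]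

variable {r : ℕ} {p : Fin r → ℕ}

/-- A block-diagonal matrix commutes with the indicator diagonal of a saturated set. -/
lemma commute_diagIdx {R : OG n} (hR : R ∈ blockSubgroup (n := n) (cutOf p))
    {s : Finset (Fin n)} (hsat : ∀ i j, sameBlock (cutOf p) i j → (i ∈ s ↔ j ∈ s)) :
    (R : Matrix (Fin n) (Fin n) ℝ) * diagIdx s = diagIdx s * (R : Matrix (Fin n) (Fin n) ℝ) := by
  ext i j
  rw [diagIdx, Matrix.mul_diagonal, Matrix.diagonal_mul]
  by_cases h0 : (R : Matrix (Fin n) (Fin n) ℝ) i j = 0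
  · rw [h0, zero_mul, mul_zero]
  · have hsb : sameBlock (cutOf p) i j := by
      by_contra hn
      exact h0 (hR i j hn)
    rw [if_congr (hsat i j hsb) rfl rfl, mul_comm]

lemma mem_blockSubgroup_of_commute (hsum : ∑ k, p k = n) {R : OG n}
    (h : ∀ k : Fin r, (R : Matrix (Fin n) (Fin n) ℝ) * diagIdx (blockFinset p k)
      = diagIdx (blockFinset p k) * (R : Matrix (Fin n) (Fin n) ℝ)) :
    R ∈ blockSubgroup (n := n) (cutOf p) := by
  intro i j hnsb
  obtain ⟨k, hik⟩ := exists_block hsum i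
  obtain ⟨k', hjk'⟩ := exists_block hsum j
  have hne : k ≠ k' := by
    rintro rfl
    exact hnsb (sameBlock_of_mem_block hik hjk')
  have hj : j ∉ blockFinset p k := fun hj => hne (block_eq_of_mem hsum hj hjk')
  have := congrFun (congrFun (h k) i) j
  rw [Matrix.mul_apply, Matrix.mul_apply] at this
  have hL : ∑ l, (R : Matrix (Fin n) (Fin n) ℝ) i l * diagIdx (blockFinset p k) l j = 0 := by
    refine Finset.sum_eq_zero fun l _ => ?_
    rw [diagIdx, Matrix.diagonal_apply]
    by_cases hlj : l = j
    · subst hlj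
      simp [hj]
    · simp [hlj]
  have hRmem : i ∈ blockFinset p k := hik
  have hRr : ∑ l, diagIdx (blockFinset p k) i l * (R : Matrix (Fin n) (Fin n) ℝ) l j
      = (R : Matrix (Fin n) (Fin n) ℝ) i j := by
    rw [Finset.sum_eq_single i]
    · rw [diagIdx, Matrix.diagonal_apply_eq, if_pos hRmem, one_mul]
    · intro l _ hl
      rw [diagIdx, Matrix.diagonal_apply_ne' _ hl, zero_mul]
    · intro hi'
      exact absurd (Finset.mem_univ i) hi'
  rw [hL, hRr] at this
  exact this.symm

/-- Well-definedness: right multiplication by a block matrix preserves saturated projectors. -/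
lemma colProj_mul_mem {U : OG n} {R : OG n} (hR : R ∈ blockSubgroup (n := n) (cutOf p))
    {s : Finset (Fin n)} (hsat : ∀ i j, sameBlock (cutOf p) i j → (i ∈ s ↔ j ∈ s)) :
    colProj (U * R) s = colProj U s := by
  rw [colProj_eq, colProj_eq]
  have hcoe : ((U * R : OG n) : Matrix (Fin n) (Fin n) ℝ)
      = (U : Matrix (Fin n) (Fin n) ℝ) * (R : Matrix (Fin n) (Fin n) ℝ) := rfl
  rw [hcoe, Matrix.transpose_mul]
  have hcomm := commute_diagIdx hR hsat
  have key : (R : Matrix (Fin n) (Fin n) ℝ) * diagIdx s * (R : Matrix (Fin n) (Fin n) ℝ)ᵀ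
      = diagIdx s := by
    rw [hcomm, Matrix.mul_assoc, OG.mul_self_transpose R, Matrix.mul_one]
  calc (U : Matrix (Fin n) (Fin n) ℝ) * (R : Matrix (Fin n) (Fin n) ℝ) * diagIdx s
        * ((R : Matrix (Fin n) (Fin n) ℝ)ᵀ * (U : Matrix (Fin n) (Fin n) ℝ)ᵀ)
      = (U : Matrix (Fin n) (Fin n) ℝ) * ((R : Matrix (Fin n) (Fin n) ℝ) * diagIdx s
        * (R : Matrix (Fin n) (Fin n) ℝ)ᵀ) * (U : Matrix (Fin n) (Fin n) ℝ)ᵀ := by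
        simp only [Matrix.mul_assoc]
    _ = (U : Matrix (Fin n) (Fin n) ℝ) * diagIdx s * (U : Matrix (Fin n) (Fin n) ℝ)ᵀ := by
        rw [key]

/-- Injectivity computation. -/
lemma mem_blockSubgroup_of_colProj (hsum : ∑ k, p k = n) {U U' : OG n}
    (h : ∀ k : Fin r, colProj U (blockFinset p k) = colProj U' (blockFinset p k)) :
    U⁻¹ * U' ∈ blockSubgroup (n := n) (cutOf p) := by
  have hcoe : ((U⁻¹ * U' : OG n) : Matrix (Fin n) (Fin n) ℝ)
      = (U : Matrix (Fin n) (Fin n) ℝ)ᵀ * (U' : Matrix (Fin n) (Fin n) ℝ) := by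
    have : ((U⁻¹ : OG n) : Matrix (Fin n) (Fin n) ℝ) = star (U : Matrix (Fin n) (Fin n) ℝ) :=
      Matrix.UnitaryGroup.inv_val U
    show ((U⁻¹ : OG n) : Matrix (Fin n) (Fin n) ℝ) * (U' : Matrix (Fin n) (Fin n) ℝ) = _
    rw [this, star_eq_transpose]
  refine mem_blockSubgroup_of_commute hsum fun k => ?_
  have hk := h k
  rw [colProj_eq, colProj_eq] at hk
  rw [hcoe]
  have h1 := OG.transpose_mul_self U
  have h2 := OG.transpose_mul_self U'
  set D := diagIdx (blockFinset p k) with hD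
  set A := (U : Matrix (Fin n) (Fin n) ℝ) with hA
  set B := (U' : Matrix (Fin n) (Fin n) ℝ) with hB
  have e2 : Aᵀ * (B * D * Bᵀ) * B = Aᵀ * (A * D * Aᵀ) * B := by rw [hk]
  have eL : Aᵀ * (B * D * Bᵀ) * B = Aᵀ * B * D := by
    simp only [Matrix.mul_assoc, h2, Matrix.mul_one]
  have eR : Aᵀ * (A * D * Aᵀ) * B = D * (Aᵀ * B) := by
    simp only [← Matrix.mul_assoc]
    rw [h1, Matrix.one_mul, Matrix.mul_assoc]
  exact (eL.symm.trans e2).trans eR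

end MA


section Top
variable {n r : ℕ} {p : Fin r → ℕ}

instance OG.compactSpace (n : ℕ) : CompactSpace (OG n) := by
  have hB : IsCompact {A : Matrix (Fin n) (Fin n) ℝ | ∀ i j, A i j ∈ Set.Icc (-1:ℝ) 1} := by
    have he : {A : Matrix (Fin n) (Fin n) ℝ | ∀ i j, A i j ∈ Set.Icc (-1:ℝ) 1}
        = Set.univ.pi (fun _ : Fin n => Set.univ.pi fun _ : Fin n => Set.Icc (-1:ℝ) 1) := by
      ext A
      exact ⟨fun h i _ j _ => h i j, fun h i j => h i (Set.mem_univ i) j (Set.mem_univ j)⟩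
    rw [he]
    exact isCompact_univ_pi fun _ => isCompact_univ_pi fun _ => isCompact_Icc
  have hclosed : IsClosed {A : Matrix (Fin n) (Fin n) ℝ | A ∈ unitary (Matrix (Fin n) (Fin n) ℝ)} := by
    have he : {A : Matrix (Fin n) (Fin n) ℝ | A ∈ unitary (Matrix (Fin n) (Fin n) ℝ)}
        = (fun A : Matrix (Fin n) (Fin n) ℝ => (star A * A, A * star A)) ⁻¹'
          {((1 : Matrix (Fin n) (Fin n) ℝ), (1 : Matrix (Fin n) (Fin n) ℝ))} := by
      ext A
      simp [Unitary.mem_iff, Prod.ext_iff]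
    rw [he]
    exact isClosed_singleton.preimage
      ((continuous_star.mul continuous_id).prodMk (continuous_id.mul continuous_star))
  have hsub : {A : Matrix (Fin n) (Fin n) ℝ | A ∈ unitary (Matrix (Fin n) (Fin n) ℝ)}
      ⊆ {A : Matrix (Fin n) (Fin n) ℝ | ∀ i j, A i j ∈ Set.Icc (-1:ℝ) 1} := by
    intro A hA i j
    have h1 : (star A * A) j j = 1 := by rw [(Unitary.mem_iff.mp hA).1]; simp [Matrix.one_apply]
    rw [Matrix.mul_apply] at h1
    simp only [Matrix.star_apply, star_trivial] at h1
    have hs : A i j * A i j ≤ 1 := by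
      rw [← h1]
      exact Finset.single_le_sum (f := fun k => A k j * A k j)
        (fun k _ => mul_self_nonneg _) (Finset.mem_univ i)
    constructor <;> nlinarith
  have hc : IsCompact {A : Matrix (Fin n) (Fin n) ℝ | A ∈ unitary (Matrix (Fin n) (Fin n) ℝ)} :=
    hB.of_isClosed_subset hclosed hsub
  exact isCompact_iff_compactSpace.mp hc

lemma continuous_colProj {n : ℕ} (s : Finset (Fin n)) :
    Continuous fun U : OG n => colProj U s := by
  apply continuous_matrix
  intro a b
  apply continuous_finset_sum
  intro i _
  have hU : Continuous fun U : OG n => (U : Matrix (Fin n) (Fin n) ℝ) := continuous_subtype_val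
  exact (hU.matrix_elem a i).mul (hU.matrix_elem b i)

instance flagSpace.compactSpace : CompactSpace (flagSpace n p) :=
  Quotient.compactSpace

lemma blockFinset_zero {k : Fin r} (hk : (k : ℕ) = 0) :
    blockFinset (n := n) p k = cumFinset (n := n) p k := by
  ext i
  simp [mem_blockFinset, mem_cumFinset, hk, dsum_zero]

lemma cum_sdiff {k k' : Fin r} (h : (k' : ℕ) + 1 = (k : ℕ)) :
    blockFinset (n := n) p k = cumFinset (n := n) p k \ cumFinset (n := n) p k' ∧
      cumFinset (n := n) p k' ⊆ cumFinset (n := n) p k := by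
  constructor
  · ext i
    simp only [mem_blockFinset, Finset.mem_sdiff, mem_cumFinset]
    rw [h]
    omega
  · intro i hi
    rw [mem_cumFinset] at hi ⊢
    have := dsum_mono p (show (k' : ℕ) + 1 ≤ (k : ℕ) + 1 by omega)
    omega

lemma colProj_sdiff (U : OG n) {s t : Finset (Fin n)} (h : t ⊆ s) :
    colProj U (s \ t) = colProj U s - colProj U t := by
  ext a b
  simp only [colProj, Matrix.of_apply, Matrix.sub_apply]
  exact Finset.sum_sdiff_eq_sub h

lemma tendsto_block_iff_cum (hsum : ∑ k, p k = n) (U : ℕ → OG n) (Ulim : OG n) :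
    (∀ k : Fin r, Tendsto (fun m => colProj (U m) (blockFinset p k)) atTop
        (𝓝 (colProj Ulim (blockFinset p k)))) ↔
    (∀ k : Fin r, Tendsto (fun m => colProj (U m) (cumFinset p k)) atTop
        (𝓝 (colProj Ulim (cumFinset p k)))) := by
  constructor
  · intro hb
    suffices H : ∀ N : ℕ, ∀ k : Fin r, (k : ℕ) = N →
        Tendsto (fun m => colProj (U m) (cumFinset p k)) atTop
          (𝓝 (colProj Ulim (cumFinset p k))) from fun k => H k k rfl
    intro N
    induction N with
    | zero =>
      intro k hk
      simp only [← blockFinset_zero hk]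
      exact hb k
    | succ j ih =>
      intro k hk
      have hjr : j < r := by have := k.isLt; omega
      have hrel : ((⟨j, hjr⟩ : Fin r) : ℕ) + 1 = (k : ℕ) := by rw [hk]
      obtain ⟨hbd, hsub⟩ := cum_sdiff (n := n) (p := p) hrel
      have hco : ∀ V : OG n, colProj V (cumFinset p k)
          = colProj V (cumFinset p ⟨j, hjr⟩) + colProj V (blockFinset p k) := by
        intro V
        rw [hbd, colProj_sdiff V hsub]
        abel
      simp only [hco]
      exact (ih ⟨j, hjr⟩ rfl).add (hb k)
  · intro hc k
    rcases Nat.eq_zero_or_pos (k : ℕ) with hk | hk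
    · simp only [blockFinset_zero hk]
      exact hc k
    · have hjr : (k : ℕ) - 1 < r := by have := k.isLt; omega
      have hrel : ((⟨(k : ℕ) - 1, hjr⟩ : Fin r) : ℕ) + 1 = (k : ℕ) := by
        show (k : ℕ) - 1 + 1 = (k : ℕ)
        omega
      obtain ⟨hbd, hsub⟩ := cum_sdiff (n := n) (p := p) hrel
      simp only [hbd, colProj_sdiff _ hsub]
      exact (hc k).sub (hc ⟨(k : ℕ) - 1, hjr⟩)

end Top

/-- **Convergence of fixed type flags** (Proposition 1.4 of the paper).
Let `I = (p_1, …, p_r)` be a type of `n` and let `V^(m) = π_I(U^(m))`, `V = π_I(U)` in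
`F_I = O(n)/O(I)`.  Then `V^(m) → V` in the quotient topology iff for every
`k = 1, …, r` the span `F_k^(m)` of the `k`-th block of columns of `U^(m)` converges to
`F_k` in the Grassmannian (i.e. the corresponding orthogonal projectors converge), iff
for every `k` the partial sums `E_k^(m) = F_1^(m) ⊕ … ⊕ F_k^(m)` converge to `E_k`. -/
theorem flag_convergence_fixed_type {n r : ℕ} (p : Fin r → ℕ) (hp : ∀ k, 0 < p k)
    (hsum : ∑ k, p k = n) (U : ℕ → OG n) (Ulim : OG n) :
    ((Tendsto (fun m => (QuotientGroup.mk (U m) : flagSpace n p)) atTop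
        (𝓝 (QuotientGroup.mk Ulim))) ↔
      ∀ k : Fin r, Tendsto (fun m => colProj (U m) (blockFinset p k)) atTop
        (𝓝 (colProj Ulim (blockFinset p k)))) ∧
    ((Tendsto (fun m => (QuotientGroup.mk (U m) : flagSpace n p)) atTop
        (𝓝 (QuotientGroup.mk Ulim))) ↔
      ∀ k : Fin r, Tendsto (fun m => colProj (U m) (cumFinset p k)) atTop
        (𝓝 (colProj Ulim (cumFinset p k)))) := by
  classical
  set f : OG n → (Fin r → Matrix (Fin n) (Fin n) ℝ) :=
    (fun U k => colProj U (blockFinset p k)) with hf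
  have hsatB : ∀ k : Fin r, ∀ i j, sameBlock (cutOf p) i j →
      (i ∈ blockFinset p k ↔ j ∈ blockFinset p k) := fun k i j hsb =>
    ⟨fun hi => blockFinset_saturated hsum hsb hi,
     fun hj => blockFinset_saturated hsum hsb.symm hj⟩
  letI sd : Setoid (OG n) := QuotientGroup.leftRel (blockSubgroup (n := n) (cutOf p))
  have hwd : ∀ a b : OG n, a ≈ b → f a = f b := by
    intro a b hab
    have hmem : a⁻¹ * b ∈ blockSubgroup (n := n) (cutOf p) :=
      QuotientGroup.leftRel_apply.mp hab
    funext k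
    have hcp := colProj_mul_mem (U := a) hmem (hsatB k)
    rw [mul_inv_cancel_left] at hcp
    exact hcp.symm
  set F : flagSpace n p → (Fin r → Matrix (Fin n) (Fin n) ℝ) := Quotient.lift f hwd with hF
  have hfc : Continuous f := continuous_pi fun k => continuous_colProj _
  have hFc : Continuous F := hfc.quotient_lift hwd
  have hFinj : Function.Injective F := by
    intro x y
    refine Quotient.inductionOn₂ x y ?_
    intro a b hab
    have hab' : ∀ k : Fin r, colProj a (blockFinset p k) = colProj b (blockFinset p k) :=
      fun k => congrFun hab k
    exact Quotient.sound (QuotientGroup.leftRel_apply.mpr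
      (mem_blockSubgroup_of_colProj hsum hab'))
  have hemb := (hFc.isClosedEmbedding hFinj).toIsEmbedding
  have key : (Tendsto (fun m => (QuotientGroup.mk (U m) : flagSpace n p)) atTop
      (𝓝 (QuotientGroup.mk Ulim))) ↔
      ∀ k : Fin r, Tendsto (fun m => colProj (U m) (blockFinset p k)) atTop
        (𝓝 (colProj Ulim (blockFinset p k))) := by
    rw [hemb.tendsto_nhds_iff]
    rw [show (F ∘ fun m => (QuotientGroup.mk (U m) : flagSpace n p)) = fun m => f (U m) from rfl,
      show F (QuotientGroup.mk Ulim) = f Ulim from rfl]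
    exact tendsto_pi_nhds
  exact ⟨key, key.trans (tendsto_block_iff_cum hsum U Ulim)⟩
end

section
/- The map h : WF(n) → Sym_+^1(n) sending the class (μ, π(U)) of (μ, U) ∈ Δ(n) × O(n) to U^T diag(λ_1,…,λ_n) U, where λ_k = Σ_{i=k}^n μ_i/i, is well defined and is a homeomorphism between WF(n) (with the quotient topology) and Sym_+^1(n) (with the topology induced by any matrix norm). -/
/-!
Statement 2 (Proposition `prop:homeo`): the eigendecomposition map
`WF(n) → Sym_+^1(n)`, `(μ, π(U)) ↦ U diag(λ_1, …, λ_n) Uᵀ` with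
`λ_k = ∑_{i=k}^n μ_i / i`, is a well-defined homeomorphism between the space of
weighted flags (with the quotient topology) and the symmetric positive semidefinite
matrices of trace one (with the matrix topology).  Here the columns of `U ∈ O(n)`
are the eigenvectors, consistently with the definition of the equivalence relation of
weighted flags via spans of the first `k` columns.
-/

open Matrix Filter Topology

/-- The unit simplex `Δ(n)`. -/
abbrev Del (n : ℕ) := {v : Fin n → ℝ // (∀ i, 0 ≤ v i) ∧ ∑ i, v i = 1}

/-- The defining equivalence of weighted flags on `Δ(n) × O(n)`. -/
def wfSetoid (n : ℕ) : Setoid (Del n × OG n) where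
  r a b := a.1 = b.1 ∧
    ∀ k : Fin n, 0 < (a.1 : Fin n → ℝ) k →
      colProj a.2 (Finset.Iic k) = colProj b.2 (Finset.Iic k)
  iseqv := by
    constructor
    · exact fun a => ⟨rfl, fun _ _ => rfl⟩
    · rintro a b ⟨h1, h2⟩
      refine ⟨h1.symm, fun k hk => ?_⟩
      rw [← h1] at hk
      exact (h2 k hk).symm
    · rintro a b c ⟨h1, h2⟩ ⟨h1', h2'⟩
      refine ⟨h1.trans h1', fun k hk => ?_⟩
      refine (h2 k hk).trans (h2' k ?_)
      rwa [← h1]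

/-- The space `WF(n)` of weighted flags, with the quotient topology. -/
def WF (n : ℕ) := Quotient (wfSetoid n)

instance (n : ℕ) : TopologicalSpace (WF n) :=
  inferInstanceAs (TopologicalSpace (Quotient (wfSetoid n)))

/-- Class of a pair `(α, U)` in `WF(n)`. -/
def mkWF {n : ℕ} (p : Del n × OG n) : WF n := Quotient.mk (wfSetoid n) p

/-- `Sym_+^1(n)`: symmetric positive semidefinite matrices of trace `1`, with the
topology induced by the space of matrices. -/
abbrev Sym1 (n : ℕ) := {A : Matrix (Fin n) (Fin n) ℝ // A.PosSemidef ∧ A.trace = 1}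

/-- The (decreasing) eigenvalues associated with weights `μ ∈ Δ(n)`:
`λ_k = ∑_{i=k}^n μ_i / i` (`0`-based indices: `λ_k = ∑_{i ≥ k} μ_i / (i+1)`). -/
noncomputable def lamOf {n : ℕ} (μ : Fin n → ℝ) (k : Fin n) : ℝ :=
  ∑ i : Fin n, if (k : ℕ) ≤ (i : ℕ) then μ i / ((i : ℕ) + 1) else 0

/-!
Put `E_k = diag(1, …, 1, 0, …, 0)` with `k + 1` ones, so that `colProj U (Iic k) = U E_k Uᵀ`
and `diag λ = ∑_k μ_k / (k + 1) • E_k`. For orthogonal `U`, `V`, conjugation by `U` and by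
`V` agree on `X` iff `W = Vᵀ U` commutes with `X`, and `W` commutes with `diag d` iff
`W i j = 0` whenever `d i ≠ d j`. If `U diag λ Uᵀ = V diag λ' Vᵀ`, then `λ = λ'` (both are the
decreasingly sorted roots of the characteristic polynomial), hence `μ = μ'`; and for `μ_k > 0`
the gap `λ_k > λ_{k+1}` makes `E_k` constant on the level sets of `λ`, so `W` commutes with
`E_k` and the `k`-th flag projectors agree. Conversely the decomposition of `diag λ` shows that
only the projectors with `μ_k > 0` matter. Surjectivity is the spectral theorem with sorted
eigenvalues, and a continuous bijection from the compact space `WF(n)` onto the Hausdorff space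
`Sym_+^1(n)` is a homeomorphism.
-/

theorem Antitone.eq_of_map_univ_eq {α : Type*} [LinearOrder α] {n : ℕ} {d d' : Fin n → α}
    (hd : Antitone d) (hd' : Antitone d')
    (h : Finset.univ.val.map d = Finset.univ.val.map d') : d = d' := by
  rw [Fin.univ_val_map, Fin.univ_val_map, Multiset.coe_eq_coe] at h
  exact List.ofFn_inj.mp (h.eq_of_sortedGE (List.sortedGE_ofFn_iff.mpr hd)
    (List.sortedGE_ofFn_iff.mpr hd'))

open Polynomial in
theorem Matrix.roots_charpoly_diagonal {m R : Type*} [Fintype m] [DecidableEq m] [CommRing R]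
    [IsDomain R] (d : m → R) : (diagonal d).charpoly.roots = Finset.univ.val.map d := by
  rw [charpoly_diagonal,
    roots_prod _ _ (Finset.prod_ne_zero_iff.mpr fun i _ => X_sub_C_ne_zero _)]
  simp

theorem Antitone.eq_of_charpoly_diagonal_eq {R : Type*} [CommRing R] [IsDomain R]
    [LinearOrder R] {n : ℕ} {d d' : Fin n → R} (hd : Antitone d) (hd' : Antitone d')
    (h : (Matrix.diagonal d).charpoly = (Matrix.diagonal d').charpoly) : d = d' :=
  hd.eq_of_map_univ_eq hd' <| by
    rw [← Matrix.roots_charpoly_diagonal, ← Matrix.roots_charpoly_diagonal, h]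

namespace Matrix

variable {m R : Type*} [Fintype m] [DecidableEq m]

theorem commute_diagonal_iff [CommRing R] [NoZeroDivisors R] {W : Matrix m m R} {d : m → R} :
    Commute W (diagonal d) ↔ ∀ i j, d i ≠ d j → W i j = 0 := by
  simp only [commute_iff_eq, ← Matrix.ext_iff, mul_diagonal, diagonal_mul]
  refine forall₂_congr fun i j => ⟨fun h hd => ?_, fun h => ?_⟩
  · have : W i j * (d j - d i) = 0 := by rw [mul_sub, h, mul_comm, sub_self]
    exact (mul_eq_zero.mp this).resolve_right (sub_ne_zero.mpr (Ne.symm hd))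
  · by_cases hd : d i = d j
    · rw [hd, mul_comm]
    · rw [h hd, zero_mul, mul_zero]

theorem _root_.Commute.diagonal_of_factorsThrough [CommRing R] [NoZeroDivisors R]
    {W : Matrix m m R} {d e : m → R} (h : Commute W (diagonal d)) (hde : e.FactorsThrough d) :
    Commute W (diagonal e) :=
  commute_diagonal_iff.mpr fun i j he =>
    commute_diagonal_iff.mp h i j fun hd => he (hde hd)

theorem conj_orthogonal_eq_iff [CommRing R] {U V : orthogonalGroup m R} {X : Matrix m m R} :
    (U : Matrix m m R) * X * (U : Matrix m m R)ᵀ = V * X * (V : Matrix m m R)ᵀ ↔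
      Commute ((V : Matrix m m R)ᵀ * U) X := by
  have hU := (mem_orthogonalGroup_iff m R).mp U.2
  have hU' := (mem_orthogonalGroup_iff' m R).mp U.2
  have hV := (mem_orthogonalGroup_iff m R).mp V.2
  have hV' := (mem_orthogonalGroup_iff' m R).mp V.2
  constructor
  · intro h
    calc (V : Matrix m m R)ᵀ * U * X
        = (V : Matrix m m R)ᵀ * (U * X * (U : Matrix m m R)ᵀ) * U := by
          simp only [Matrix.mul_assoc, hU', Matrix.mul_one]
      _ = X * ((V : Matrix m m R)ᵀ * U) := by
          rw [h]
          simp only [← Matrix.mul_assoc, hV', Matrix.one_mul]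
  · intro h
    calc (U : Matrix m m R) * X * (U : Matrix m m R)ᵀ
        = V * (((V : Matrix m m R)ᵀ * U) * X) * (U : Matrix m m R)ᵀ := by
          simp only [← Matrix.mul_assoc, hV, Matrix.one_mul]
      _ = V * X * (V : Matrix m m R)ᵀ := by
          rw [h.eq]
          simp only [Matrix.mul_assoc, hU, Matrix.mul_one]

theorem charpoly_conj_orthogonal [CommRing R] (U : orthogonalGroup m R) (X : Matrix m m R) :
    ((U : Matrix m m R) * X * (U : Matrix m m R)ᵀ).charpoly = X.charpoly := by
  rw [charpoly_mul_comm, ← Matrix.mul_assoc, (mem_orthogonalGroup_iff' m R).mp U.2,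
    Matrix.one_mul]

theorem trace_conj_orthogonal [CommRing R] (U : orthogonalGroup m R) (X : Matrix m m R) :
    ((U : Matrix m m R) * X * (U : Matrix m m R)ᵀ).trace = X.trace := by
  rw [trace_mul_cycle, (mem_orthogonalGroup_iff' m R).mp U.2, Matrix.one_mul]

theorem submatrix_id_perm_mem_orthogonalGroup [CommRing R] {U : Matrix m m R}
    (hU : U ∈ orthogonalGroup m R) (σ : Equiv.Perm m) :
    U.submatrix id σ ∈ orthogonalGroup m R := by
  rw [mem_orthogonalGroup_iff, transpose_submatrix, submatrix_mul_equiv _ _ _ σ,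
    (mem_orthogonalGroup_iff m R).mp hU, submatrix_id_id]

theorem submatrix_id_perm_conj_diagonal [CommRing R] (U : Matrix m m R) (d : m → R)
    (σ : Equiv.Perm m) :
    U.submatrix id σ * diagonal (d ∘ σ) * (U.submatrix id σ)ᵀ = U * diagonal d * Uᵀ := by
  rw [← submatrix_diagonal_equiv, transpose_submatrix, submatrix_mul_equiv _ _ _ σ,
    submatrix_mul_equiv _ _ _ σ, submatrix_id_id]

theorem IsHermitian.exists_orthogonal_antitone_diagonalization {n : ℕ}
    {A : Matrix (Fin n) (Fin n) ℝ} (hA : A.IsHermitian) :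
    ∃ (U : orthogonalGroup (Fin n) ℝ) (d : Fin n → ℝ),
      Antitone d ∧ A = U * diagonal d * (U : Matrix (Fin n) (Fin n) ℝ)ᵀ := by
  set σ := Tuple.sort (OrderDual.toDual ∘ hA.eigenvalues)
  refine ⟨⟨_, submatrix_id_perm_mem_orthogonalGroup hA.eigenvectorUnitary.2 σ⟩,
    hA.eigenvalues ∘ σ, Tuple.monotone_sort (OrderDual.toDual ∘ hA.eigenvalues), ?_⟩
  rw [submatrix_id_perm_conj_diagonal]
  conv_lhs => rw [hA.spectral_theorem]
  simp [star_eq_conjTranspose]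

theorem PosSemidef.nonneg_of_eq_conj_diagonal {A : Matrix m m ℝ} (hA : A.PosSemidef)
    {U : orthogonalGroup m ℝ} {d : m → ℝ} (h : A = U * diagonal d * (U : Matrix m m ℝ)ᵀ) :
    0 ≤ d := by
  have hU := (mem_orthogonalGroup_iff' m ℝ).mp U.2
  have hd : diagonal d = (U : Matrix m m ℝ)ᴴ * A * U := by
    simp only [h, conjTranspose_eq_transpose_of_trivial, ← Matrix.mul_assoc, hU, Matrix.one_mul]
    simp only [Matrix.mul_assoc, hU, Matrix.mul_one]
  exact posSemidef_diagonal_iff.mp (hd ▸ hA.conjTranspose_mul_mul_same _)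

theorem isCompact_unitaryGroup (𝕜 : Type*) [RCLike 𝕜] :
    IsCompact (unitaryGroup m 𝕜 : Set (Matrix m m 𝕜)) := by
  have hclosed : IsClosed (unitaryGroup m 𝕜 : Set (Matrix m m 𝕜)) := isClosed_unitary
  open scoped Matrix.Norms.Elementwise in
  exact Metric.isCompact_of_isClosed_isBounded hclosed <|
    Metric.isBounded_closedBall.subset fun U hU =>
      mem_closedBall_zero_iff.mpr (entrywise_sup_norm_bound_of_unitary hU)

instance {𝕜 : Type*} [RCLike 𝕜] : CompactSpace (unitaryGroup m 𝕜) :=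
  isCompact_iff_compactSpace.mp (isCompact_unitaryGroup 𝕜)

end Matrix

section Weights

variable {n : ℕ}

def extendByZero (f : Fin n → ℝ) (j : ℕ) : ℝ := if h : j < n then f ⟨j, h⟩ else 0

@[simp]
theorem extendByZero_coe (f : Fin n → ℝ) (i : Fin n) : extendByZero f i = f i := by
  simp [extendByZero]

theorem extendByZero_nonneg {f : Fin n → ℝ} (hf : 0 ≤ f) : 0 ≤ extendByZero f := fun j => by
  unfold extendByZero
  split_ifs
  exacts [hf _, le_rfl]

theorem antitone_extendByZero {lam : Fin n → ℝ} (hlam : Antitone lam) (hlam0 : 0 ≤ lam) :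
    Antitone (extendByZero lam) := fun a b hab => by
  unfold extendByZero
  split_ifs with hb ha ha
  · exact hlam (Fin.mk_le_mk.mpr hab)
  · omega
  · exact hlam0 _
  · exact le_rfl

theorem extendByZero_lamOf (μ : Fin n → ℝ) (j : ℕ) :
    extendByZero (lamOf μ) j = ∑ i ∈ Finset.Ico j n, extendByZero μ i / (i + 1) := by
  by_cases hj : j < n
  · have hfilter : (Finset.range n).filter (j ≤ ·) = Finset.Ico j n := by
      ext i; simp only [Finset.mem_filter, Finset.mem_range, Finset.mem_Ico]; omega
    rw [extendByZero, dif_pos hj, lamOf, ← hfilter, Finset.sum_filter]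
    simp_rw [← extendByZero_coe μ]
    exact Fin.sum_univ_eq_sum_range
      (fun i => if j ≤ i then extendByZero μ i / (i + 1) else 0) n
  · rw [extendByZero, dif_neg hj, Finset.Ico_eq_empty_of_le (not_lt.mp hj), Finset.sum_empty]

theorem lamOf_sub_lamOf (μ : Fin n → ℝ) {i j : Fin n} (hij : i ≤ j) :
    lamOf μ i - lamOf μ j = ∑ l ∈ Finset.Ico (i : ℕ) j, extendByZero μ l / (l + 1) := by
  rw [← extendByZero_coe (lamOf μ), ← extendByZero_coe (lamOf μ), extendByZero_lamOf,
    extendByZero_lamOf, ← Finset.sum_Ico_consecutive _ hij j.2.le, add_sub_cancel_right]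

theorem lamOf_nonneg {μ : Fin n → ℝ} (hμ : 0 ≤ μ) : 0 ≤ lamOf μ := fun k =>
  Finset.sum_nonneg fun i _ => by
    split_ifs
    exacts [div_nonneg (hμ i) (by positivity), le_rfl]

theorem lamOf_antitone {μ : Fin n → ℝ} (hμ : 0 ≤ μ) : Antitone (lamOf μ) := fun i j hij => by
  rw [← sub_nonneg, lamOf_sub_lamOf μ hij]
  exact Finset.sum_nonneg fun l _ => div_nonneg (extendByZero_nonneg hμ l) (by positivity)

theorem lamOf_lt_lamOf {μ : Fin n → ℝ} (hμ : 0 ≤ μ) {i j k : Fin n} (hk : 0 < μ k)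
    (hik : i ≤ k) (hkj : k < j) : lamOf μ j < lamOf μ i := by
  rw [← sub_pos, lamOf_sub_lamOf μ (hik.trans hkj.le)]
  exact Finset.sum_pos' (fun l _ => div_nonneg (extendByZero_nonneg hμ l) (by positivity))
    ⟨k, Finset.mem_Ico.mpr ⟨hik, hkj⟩, by rw [extendByZero_coe]; positivity⟩

theorem sum_lamOf (μ : Fin n → ℝ) : ∑ k, lamOf μ k = ∑ i, μ i := by
  unfold lamOf
  rw [Finset.sum_comm]
  refine Finset.sum_congr rfl fun i _ => ?_
  rw [← Finset.sum_filter, Finset.sum_const, nsmul_eq_mul]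
  have hIic : Finset.univ.filter (fun k : Fin n => (k : ℕ) ≤ (i : ℕ)) = Finset.Iic i := by
    ext k
    simp only [Finset.mem_filter, Finset.mem_univ, true_and, Finset.mem_Iic, Fin.le_def]
  rw [hIic, Fin.card_Iic]
  field_simp
  push_cast
  ring

def weightsOf (lam : Fin n → ℝ) (k : Fin n) : ℝ :=
  ((k : ℕ) + 1) * (extendByZero lam k - extendByZero lam (k + 1))

theorem weightsOf_lamOf (μ : Fin n → ℝ) : weightsOf (lamOf μ) = μ := by
  funext k
  rw [weightsOf, extendByZero_lamOf, extendByZero_lamOf, Finset.sum_eq_sum_Ico_succ_bot k.2,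
    add_sub_cancel_right, extendByZero_coe]
  field_simp

theorem lamOf_weightsOf (lam : Fin n → ℝ) : lamOf (weightsOf lam) = lam := by
  funext k
  rw [← extendByZero_coe (lamOf _), extendByZero_lamOf]
  have hterm : ∀ i ∈ Finset.Ico (k : ℕ) n, extendByZero (weightsOf lam) i / (i + 1) =
      extendByZero lam i - extendByZero lam (i + 1) := fun i hi => by
    rw [extendByZero, dif_pos (Finset.mem_Ico.mp hi).2, weightsOf]
    field_simp
  rw [Finset.sum_congr rfl hterm, ← neg_inj, ← Finset.sum_neg_distrib]
  simp only [neg_sub]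
  rw [Finset.sum_Ico_sub _ k.2.le]
  simp [extendByZero]

theorem weightsOf_nonneg {lam : Fin n → ℝ} (hlam : Antitone lam) (hlam0 : 0 ≤ lam) :
    0 ≤ weightsOf lam := fun k =>
  mul_nonneg (by positivity) <|
    sub_nonneg.mpr (antitone_extendByZero hlam hlam0 (Nat.le_succ k))

end Weights

section WeightedFlags

open Matrix

variable {n : ℕ}

theorem colProj_eq_conj_diagonal (U : OG n) (s : Finset (Fin n)) :
    colProj U s = (U : Matrix (Fin n) (Fin n) ℝ) * diagonal (fun i => if i ∈ s then 1 else 0) *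
      (U : Matrix (Fin n) (Fin n) ℝ)ᵀ := by
  ext a b
  rw [mul_apply]
  simp [colProj, mul_diagonal, Finset.sum_ite_mem]

theorem diagonal_lamOf (μ : Fin n → ℝ) :
    diagonal (lamOf μ) =
      ∑ k, (μ k / ((k : ℕ) + 1)) • diagonal (fun i => if i ∈ Finset.Iic k then 1 else 0) := by
  refine Matrix.ext fun a b => ?_
  rcases eq_or_ne a b with rfl | hab
  · rw [diagonal_apply_eq, Matrix.sum_apply, lamOf]
    refine Finset.sum_congr rfl fun k _ => ?_
    simp only [Matrix.smul_apply, diagonal_apply_eq, Finset.mem_Iic, Fin.le_def, smul_eq_mul,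
      mul_ite, mul_one, mul_zero]
  · simp [Matrix.sum_apply, hab]

theorem le_iff_le_of_lamOf_eq {μ : Fin n → ℝ} (hμ : 0 ≤ μ) {i j k : Fin n} (hk : 0 < μ k)
    (hij : lamOf μ i = lamOf μ j) : i ≤ k ↔ j ≤ k := by
  constructor <;> intro h <;> by_contra! h'
  exacts [(lamOf_lt_lamOf hμ hk h h').ne' hij, (lamOf_lt_lamOf hμ hk h h').ne hij]

noncomputable def flagMatrix (p : Del n × OG n) : Sym1 n :=
  ⟨p.2 * diagonal (lamOf (p.1 : Fin n → ℝ)) * (p.2 : Matrix (Fin n) (Fin n) ℝ)ᵀ,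
    by simpa only [conjTranspose_eq_transpose_of_trivial] using
      (posSemidef_diagonal_iff.mpr (lamOf_nonneg p.1.2.1)).mul_mul_conjTranspose_same
        (p.2 : Matrix (Fin n) (Fin n) ℝ),
    by rw [trace_conj_orthogonal, trace_diagonal, sum_lamOf, p.1.2.2]⟩

theorem flagMatrix_eq_flagMatrix_iff {p q : Del n × OG n} :
    flagMatrix p = flagMatrix q ↔ (wfSetoid n).r p q := by
  obtain ⟨μ, U⟩ := p
  obtain ⟨ν, V⟩ := q
  have hproj (k : Fin n) : colProj U (Finset.Iic k) = colProj V (Finset.Iic k) ↔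
      Commute ((V : Matrix (Fin n) (Fin n) ℝ)ᵀ * U)
        (diagonal fun i => if i ∈ Finset.Iic k then 1 else 0) := by
    rw [colProj_eq_conj_diagonal, colProj_eq_conj_diagonal]
    exact conj_orthogonal_eq_iff
  simp only [flagMatrix, Subtype.mk.injEq]
  constructor
  · intro h
    have hlam : lamOf (μ : Fin n → ℝ) = lamOf (ν : Fin n → ℝ) :=
      (lamOf_antitone μ.2.1).eq_of_charpoly_diagonal_eq (lamOf_antitone ν.2.1) <| by
        simpa only [charpoly_conj_orthogonal] using congrArg charpoly h
    obtain rfl : μ = ν := Subtype.ext <| by rw [← weightsOf_lamOf μ.1, hlam, weightsOf_lamOf]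
    refine ⟨rfl, fun k hk => (hproj k).mpr <|
      (conj_orthogonal_eq_iff.mp h).diagonal_of_factorsThrough fun i j hij => ?_⟩
    simp only [Finset.mem_Iic, le_iff_le_of_lamOf_eq μ.2.1 hk hij]
  · rintro ⟨rfl, h⟩
    refine conj_orthogonal_eq_iff.mpr ?_
    rw [diagonal_lamOf]
    refine Commute.sum_right _ _ _ fun k _ => ?_
    rcases (μ.2.1 k).eq_or_lt with hk | hk
    · rw [← hk, zero_div, zero_smul]
      exact Commute.zero_right _
    · exact ((hproj k).mp (h k hk)).smul_right _

theorem flagMatrix_surjective : Function.Surjective (flagMatrix (n := n)) := by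
  rintro ⟨A, hA, htr⟩
  obtain ⟨U, d, hd, rfl⟩ := hA.isHermitian.exists_orthogonal_antitone_diagonalization
  have hd0 := hA.nonneg_of_eq_conj_diagonal rfl
  refine ⟨(⟨weightsOf d, weightsOf_nonneg hd hd0, ?_⟩, U), ?_⟩
  · rw [← sum_lamOf, lamOf_weightsOf, ← trace_diagonal, ← trace_conj_orthogonal U, htr]
  · simp only [flagMatrix, lamOf_weightsOf]

theorem continuous_flagMatrix : Continuous (flagMatrix (n := n)) := by
  have hU : Continuous fun p : Del n × OG n => (p.2 : Matrix (Fin n) (Fin n) ℝ) := by fun_prop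
  have hμ : Continuous fun p : Del n × OG n => (p.1 : Fin n → ℝ) := by fun_prop
  have hlam : Continuous fun p : Del n × OG n => lamOf (p.1 : Fin n → ℝ) :=
    continuous_pi fun k => continuous_finsetSum _ fun i _ => by
      split_ifs
      exacts [((continuous_apply i).comp hμ).div_const _, continuous_const]
  exact ((hU.matrix_mul hlam.matrix_diagonal).matrix_mul hU.matrix_transpose).subtype_mk _

instance (n : ℕ) : CompactSpace (Del n) := inferInstanceAs (CompactSpace (stdSimplex ℝ (Fin n)))

instance (n : ℕ) : CompactSpace (WF n) := Quotient.compactSpace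

end WeightedFlags

/-- **Weighted flags are homeomorphic to `Sym_+^1(n)`** (Proposition 1.14 of the
paper).  The map sending the class of `(μ, U) ∈ Δ(n) × O(n)` to
`U diag(λ_1, …, λ_n) Uᵀ`, where `λ_k = ∑_{i=k}^n μ_i / i`, is well defined on the
quotient `WF(n)` and is a homeomorphism onto `Sym_+^1(n)`. -/
theorem weightedFlags_homeo_sym1 (n : ℕ) :
    ∃ h : WF n ≃ₜ Sym1 n,
      ∀ p : Del n × OG n,
        (h (mkWF p) : Matrix (Fin n) (Fin n) ℝ) =
          (p.2 : Matrix (Fin n) (Fin n) ℝ) * Matrix.diagonal (lamOf (p.1 : Fin n → ℝ)) *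
            (p.2 : Matrix (Fin n) (Fin n) ℝ)ᵀ := by
  have hwd : ∀ p q, (wfSetoid n).r p q → flagMatrix p = flagMatrix q :=
    fun _ _ => flagMatrix_eq_flagMatrix_iff.mpr
  let F : WF n → Sym1 n := Quotient.lift flagMatrix hwd
  have hF : Function.Bijective F :=
    ⟨by rintro ⟨p⟩ ⟨q⟩ h; exact Quotient.sound (flagMatrix_eq_flagMatrix_iff.mp h),
      Function.Surjective.of_comp (g := Quotient.mk (wfSetoid n)) flagMatrix_surjective⟩
  exact ⟨(continuous_flagMatrix.quotient_lift hwd).homeoOfEquivCompactToT2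
    (f := Equiv.ofBijective F hF), fun _ => rfl⟩
end

section
/- Let I = (p_1,…,p_r) be a type with partial sums d_k = p_1+…+p_k, and let μ ∈ Δ(n) have type I, i.e. μ_{d_k} > 0 for all k = 1,…,r−1 and μ_i = 0 for all i ∉ {d_1,…,d_r}. Let f : [0,1]^n → ℝ₊ be continuous with f(x) = 0 iff x = 0. Then: (1) for every R ∈ O(I) and every B, C ∈ m_I, Σ_{1≤i<j≤n} f(μ_{i→j})² (R^T B R)_{ij}(R^T C R)_{ij} = Σ_{1≤i<j≤n} f(μ_{i→j})² B_{ij} C_{ij}; (2) the symmetric bilinear form ((α,B),(β,C)) ↦ Σ_{i=1}^n α_i β_i + Σ_{1≤i<j≤n} f(μ_{i→j})² B_{ij} C_{ij} is positive definite on {α ∈ ℝⁿ : α_j = 0 for j with μ_j = 0, Σα_i = 0} × m_I. -/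
/-!
Statement 3 (key computations behind Proposition `prop:WFriemannianMetrics`):
invariance of the pinched metric under `O(I)`-conjugation, and positive definiteness
on the tangent space of the cell.

A type `I = (p_1, …, p_r)` is encoded by `p : Fin r → ℕ` with partial sums `d_k`.
`O(I)` is the block-diagonal subgroup of `O(n)`, `Skew(I)` the block-diagonal skew
matrices, and `m_I` its orthogonal complement in `Skew(n)` (the skew matrices whose
diagonal blocks vanish).  For `μ ∈ Δ(n)` and `i < j`, `μ_{i→j}` is the vector with
entries `μ_i, …, μ_{j-1}` in positions `i, …, j-1` and zeros elsewhere (written here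
with `0`-based indices).
-/

open Matrix Filter Topology

/-- `m_I`: skew-symmetric matrices whose diagonal blocks (w.r.t. the cuts `c`)
vanish, i.e. the orthogonal complement of `Skew(I)` in `Skew(n)`. -/
def mSet {n : ℕ} (c : Fin n → Prop) : Set (Matrix (Fin n) (Fin n) ℝ) :=
  {B | Bᵀ = -B ∧ ∀ i j : Fin n, sameBlock c i j → B i j = 0}

/-- The truncated weight vector `μ_{i→j}` (0-based indices): entries `μ_i, …, μ_{j-1}`
in positions `i, …, j-1` and zeros elsewhere. -/
def trunc {n : ℕ} (μ : Fin n → ℝ) (i j : Fin n) : Fin n → ℝ :=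
  fun l => if (i : ℕ) ≤ (l : ℕ) ∧ (l : ℕ) < (j : ℕ) then μ l else 0

/-- The pinched bilinear form `(B, C) ↦ ∑_{i<j} f(μ_{i→j})² B_{ij} C_{ij}`. -/
def pinched {n : ℕ} (f : (Fin n → ℝ) → ℝ) (μ : Fin n → ℝ)
    (B C : Matrix (Fin n) (Fin n) ℝ) : ℝ :=
  ∑ i : Fin n, ∑ j : Fin n,
    if (i : ℕ) < (j : ℕ) then (f (trunc μ i j))^2 * (B i j * C i j) else 0


section Aux

lemma trunc_congr' {n : ℕ} (c : Fin n → Prop) (μ : Fin n → ℝ)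
    (hz : ∀ s : Fin n, μ s ≠ 0 → c s) {i j k l : Fin n}
    (hki : sameBlock c k i) (hlj : sameBlock c l j) :
    trunc μ k l = trunc μ i j := by
  funext s
  unfold trunc
  by_cases hs : μ s = 0
  · split <;> split <;> simp [hs]
  · have hc : c s := hz s hs
    have h1 := hki s hc
    have h2 : ((s:ℕ) < (l:ℕ)) ↔ ((s:ℕ) < (j:ℕ)) := by
      rw [← not_le, ← not_le, hlj s hc]
    simp only [h1, h2]

lemma pinched_conj_inv {n : ℕ} (c : Fin n → Prop) (W : Fin n → Fin n → ℝ)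
    (hW : ∀ i j k l : Fin n, sameBlock c k i → sameBlock c l j → W k l = W i j)
    (R : Matrix (Fin n) (Fin n) ℝ) (hR : ∀ i j, ¬ sameBlock c i j → R i j = 0)
    (hRR : R * Rᵀ = 1) (B C : Matrix (Fin n) (Fin n) ℝ) :
    ∑ i, ∑ j, W i j * ((Rᵀ*B*R) i j * ((Rᵀ*C*R) i j)) = ∑ i, ∑ j, W i j * (B i j * C i j) := by
  have expand : ∀ (M : Matrix (Fin n) (Fin n) ℝ) (i j : Fin n),
      (Rᵀ * M * R) i j = ∑ k, ∑ l, R k i * M k l * R l j := by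
    intro M i j
    simp only [Matrix.mul_apply, Matrix.transpose_apply, Finset.sum_mul]
    exact Finset.sum_comm
  have key : ∀ (M : Matrix (Fin n) (Fin n) ℝ),
      (Rᵀ * (Matrix.of fun a b => W a b * M a b) * R)
        = Matrix.of (fun i j => W i j * (Rᵀ*M*R) i j) := by
    intro M
    ext i j
    rw [expand, Matrix.of_apply, expand, Finset.mul_sum]
    refine Finset.sum_congr rfl fun k _ => ?_
    rw [Finset.mul_sum]
    refine Finset.sum_congr rfl fun l _ => ?_
    rw [Matrix.of_apply]
    by_cases hk : R k i = 0
    · simp [hk]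
    by_cases hl : R l j = 0
    · simp [hl]
    have hki : sameBlock c k i := by by_contra h; exact hk (hR k i h)
    have hlj : sameBlock c l j := by by_contra h; exact hl (hR l j h)
    rw [hW i j k l hki hlj]; ring
  have trace_form : ∀ (X Y : Matrix (Fin n) (Fin n) ℝ),
      ∑ i, ∑ j, W i j * (X i j * Y i j)
        = Matrix.trace ((Matrix.of fun a b => W a b * X a b)ᵀ * Y) := by
    intro X Y
    rw [Matrix.trace, Finset.sum_comm]
    refine Finset.sum_congr rfl fun j _ => ?_
    rw [Matrix.diag_apply, Matrix.mul_apply]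
    refine Finset.sum_congr rfl fun i _ => ?_
    rw [Matrix.transpose_apply, Matrix.of_apply]; ring
  rw [trace_form, trace_form, ← key B]
  have h1 : ((Rᵀ * Matrix.of (fun a b => W a b * B a b) * R)ᵀ) * (Rᵀ * C * R)
      = Rᵀ * ((Matrix.of (fun a b => W a b * B a b))ᵀ * C) * R := by
    rw [Matrix.transpose_mul, Matrix.transpose_mul, Matrix.transpose_transpose]
    set M := (Matrix.of (fun a b => W a b * B a b))ᵀ
    calc Rᵀ * (M * Rᵀᵀ) * (Rᵀ * C * R)
        = Rᵀ * (M * ((R * Rᵀ) * (C * R))) := by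
          rw [Matrix.transpose_transpose]
          simp only [Matrix.mul_assoc]
      _ = Rᵀ * (M * C) * R := by rw [hRR, one_mul]; simp only [Matrix.mul_assoc]
  rw [h1, Matrix.trace_mul_cycle]
  rw [← Matrix.mul_assoc, hRR, one_mul]

end Aux

/-- **Invariance and positive definiteness of the pinched metric**
(content of Proposition 3.2 of the paper).  Let `I = (p_1, …, p_r)` be a type with
partial sums `d_k`, and `μ ∈ Δ(n)` of type `I` (i.e. `μ_{d_k} > 0` for `k < r` and
`μ_i = 0` for `i ∉ {d_1, …, d_r}`).  Let `f : [0,1]^n → ℝ₊` be continuous with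
`f(x) = 0` iff `x = 0`.  Then
(1) the form `∑_{i<j} f(μ_{i→j})² B_{ij} C_{ij}` is invariant under conjugation by
any `R ∈ O(I)` of `B, C ∈ m_I`; and
(2) the symmetric bilinear form
`((α,B),(β,C)) ↦ ∑ α_i β_i + ∑_{i<j} f(μ_{i→j})² B_{ij} C_{ij}` is positive definite
on `{α : α_j = 0 whenever μ_j = 0, ∑ α_i = 0} × m_I`. -/
theorem pinched_metric_invariant_and_posdef {n r : ℕ} (p : Fin r → ℕ)
    (hp : ∀ k, 0 < p k) (hsum : ∑ k, p k = n)
    (μ : Fin n → ℝ) (hμ0 : ∀ i, 0 ≤ μ i) (hμ1 : ∑ i, μ i = 1)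
    (hpos : ∀ i : Fin n, cutOf p i → (i : ℕ) + 1 < n → 0 < μ i)
    (hzero : ∀ i : Fin n, ¬ cutOf p i → μ i = 0)
    (f : (Fin n → ℝ) → ℝ)
    (hfc : ContinuousOn f (Set.Icc (0 : Fin n → ℝ) 1))
    (hfnn : ∀ x ∈ Set.Icc (0 : Fin n → ℝ) 1, 0 ≤ f x)
    (hf0 : ∀ x ∈ Set.Icc (0 : Fin n → ℝ) 1, (f x = 0 ↔ x = 0)) :
    ((∀ R : OG n, R ∈ blockSubgroup (cutOf p) →
        ∀ B ∈ mSet (cutOf p), ∀ C ∈ mSet (cutOf p),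
          pinched f μ ((R : Matrix (Fin n) (Fin n) ℝ)ᵀ * B * (R : Matrix (Fin n) (Fin n) ℝ))
              ((R : Matrix (Fin n) (Fin n) ℝ)ᵀ * C * (R : Matrix (Fin n) (Fin n) ℝ)) =
            pinched f μ B C)) ∧
    (∀ (α : Fin n → ℝ), ∀ B ∈ mSet (cutOf p),
        (∀ j : Fin n, μ j = 0 → α j = 0) → (∑ i, α i = 0) →
        (α ≠ 0 ∨ B ≠ 0) →
        0 < (∑ i, (α i)^2) + pinched f μ B B) := by
  have hz : ∀ s : Fin n, μ s ≠ 0 → cutOf p s := fun s hs => by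
    by_contra h; exact hs (hzero s h)
  have h01 : (0 : Fin n → ℝ) ∈ Set.Icc (0 : Fin n → ℝ) 1 := ⟨le_refl _, zero_le_one⟩
  have hf00 : f 0 = 0 := (hf0 0 h01).mpr rfl
  have htrunc0 : ∀ i j : Fin n, ¬ ((i:ℕ) < (j:ℕ)) → trunc μ i j = 0 := by
    intro i j h
    funext l
    simp only [trunc, Pi.zero_apply]
    rw [if_neg (by omega)]
  have pinched_eq : ∀ B C : Matrix (Fin n) (Fin n) ℝ,
      pinched f μ B C = ∑ i, ∑ j, (f (trunc μ i j))^2 * (B i j * C i j) := by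
    intro B C
    unfold pinched
    refine Finset.sum_congr rfl fun i _ => Finset.sum_congr rfl fun j _ => ?_
    by_cases h : (i:ℕ) < (j:ℕ)
    · rw [if_pos h]
    · rw [if_neg h, htrunc0 i j h, hf00]; ring
  have hnn : ∀ (B : Matrix (Fin n) (Fin n) ℝ) (i j : Fin n),
      (0:ℝ) ≤ (if (i:ℕ) < (j:ℕ) then (f (trunc μ i j))^2 * (B i j * B i j) else 0) := by
    intro B i j
    split
    · exact mul_nonneg (sq_nonneg _) (mul_self_nonneg _)
    · exact le_refl 0
  constructor
  · -- invariance
    intro R hRm B _hB C _hC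
    have hRz : ∀ i j : Fin n, ¬ sameBlock (cutOf p) i j →
        (R : Matrix (Fin n) (Fin n) ℝ) i j = 0 := hRm
    have hRR : (R : Matrix (Fin n) (Fin n) ℝ) * (R : Matrix (Fin n) (Fin n) ℝ)ᵀ = 1 := by
      have := R.2
      rw [Matrix.mem_orthogonalGroup_iff] at this
      exact this
    rw [pinched_eq, pinched_eq]
    exact pinched_conj_inv (cutOf p) (fun i j => (f (trunc μ i j))^2)
      (fun i j k l hki hlj => by
        show f (trunc μ k l)^2 = f (trunc μ i j)^2
        rw [trunc_congr' (cutOf p) μ hz hki hlj])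
      _ hRz hRR B C
  · -- positive definiteness
    intro α B hB _hα0 _hαsum hne
    obtain ⟨hBskew, hBblock⟩ := hB
    have hα_nonneg : (0:ℝ) ≤ ∑ i, (α i)^2 := Finset.sum_nonneg fun i _ => sq_nonneg _
    have hpin_nonneg : 0 ≤ pinched f μ B B :=
      Finset.sum_nonneg fun i _ => Finset.sum_nonneg fun j _ => hnn B i j
    rcases hne with hαne | hBne
    · obtain ⟨i, hi⟩ := Function.ne_iff.mp hαne
      have : (0:ℝ) < ∑ i, (α i)^2 :=
        Finset.sum_pos' (fun i _ => sq_nonneg _)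
          ⟨i, Finset.mem_univ i, lt_of_le_of_ne (sq_nonneg _) (Ne.symm (pow_ne_zero 2 hi))⟩
      exact add_pos_of_pos_of_nonneg this hpin_nonneg
    · -- B ≠ 0
      have hdiag : ∀ i : Fin n, B i i = 0 := by
        intro i
        have := congrFun (congrFun hBskew i) i
        simp only [Matrix.transpose_apply, Matrix.neg_apply] at this
        linarith
    
      obtain ⟨i, hi⟩ := Function.ne_iff.mp hBne
      obtain ⟨j, hij⟩ := Function.ne_iff.mp hi
      obtain ⟨a, b, hab, hBab⟩ : ∃ a b : Fin n, (a:ℕ) < (b:ℕ) ∧ B a b ≠ 0 := by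
        rcases lt_trichotomy (i:ℕ) (j:ℕ) with h | h | h
        · exact ⟨i, j, h, hij⟩
        · exact absurd (by rw [Fin.ext h] at hij; exact hdiag j) (by rw [Fin.ext h] at hij; exact hij)
        · refine ⟨j, i, h, ?_⟩
          have hji : B j i = - B i j := by
            have := congrFun (congrFun hBskew j) i
            simp only [Matrix.transpose_apply, Matrix.neg_apply] at this
            linarith
          rw [hji]
          exact neg_ne_zero.mpr hij
      have hns : ¬ sameBlock (cutOf p) a b := fun h => hBab (hBblock a b h)
      unfold sameBlock at hns
      push_neg at hns
      obtain ⟨t, ht, hiff⟩ := hns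
      have hat : (a:ℕ) ≤ (t:ℕ) ∧ (t:ℕ) < (b:ℕ) := by
        rcases le_or_gt (a:ℕ) (t:ℕ) with h1 | h1 <;>
          rcases le_or_gt (b:ℕ) (t:ℕ) with h2 | h2 <;>
            first
              | (exact ⟨h1, by omega⟩)
              | (exact absurd (iff_of_true h1 h2) hiff)
              | (exact absurd (iff_of_false (by omega) (by omega)) hiff)
              | omega
      have hμt : 0 < μ t := hpos t ht (by have := b.isLt; omega)
      have hmem : trunc μ a b ∈ Set.Icc (0 : Fin n → ℝ) 1 := by
        constructor
        · intro l
          simp only [trunc, Pi.zero_apply]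
          split
          · exact hμ0 l
          · exact le_refl 0
        · intro l
          simp only [trunc, Pi.one_apply]
          split
          · calc μ l ≤ ∑ i, μ i :=
                  Finset.single_le_sum (fun i _ => hμ0 i) (Finset.mem_univ l)
              _ = 1 := hμ1
          · exact zero_le_one
      have htne : trunc μ a b ≠ 0 := by
        intro h
        have := congrFun h t
        simp only [trunc, Pi.zero_apply] at this
        rw [if_pos ⟨hat.1, hat.2⟩] at this
        linarith
      have hfne : f (trunc μ a b) ≠ 0 := fun h => htne ((hf0 _ hmem).mp h)
      have hterm : (0:ℝ) <
          (if (a:ℕ) < (b:ℕ) then (f (trunc μ a b))^2 * (B a b * B a b) else 0) := by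
        rw [if_pos hab]
        exact mul_pos (lt_of_le_of_ne (sq_nonneg _) (Ne.symm (pow_ne_zero 2 hfne)))
          (mul_self_pos.mpr hBab)
      have hpin : 0 < pinched f μ B B := by
        unfold pinched
        exact Finset.sum_pos' (fun i _ => Finset.sum_nonneg fun j _ => hnn B i j)
          ⟨a, Finset.mem_univ a,
            Finset.sum_pos' (fun j _ => hnn B a j) ⟨b, Finset.mem_univ b, hterm⟩⟩
      exact add_pos_of_nonneg_of_pos hα_nonneg hpin
end

section
/- Let K ⊆ {1,…,n} be nonempty, r = |K|, I = I(K), and let γ = (μ, W) : [a,b] → M(r;K) be a piecewise C¹ path with a piecewise C¹ lift U : [a,b] → O(n) of W (i.e. π_I(U(t)) = W(t)). Then the length of γ with respect to the metric g equals L_g(γ) = ∫_a^b √( |μ′(t)|² + Σ_{1≤i<j≤n} f(μ_{i→j}(t))² (U(t)^T U′(t))_{ij}² ) dt; in particular the right-hand side is independent of the choice of the lift U. -/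
/-!
Statement 4 (Proposition `prop:WFriemannianMetrics` (iii)): the length of a piecewise
`C¹` path in an elementary cell `M(r; K)` of `WF(n)` is computed by
`L_g(γ) = ∫ √(|μ′(t)|² + ∑_{i<j} f(μ_{i→j}(t))² (U(t)ᵀU′(t))_{ij}²) dt`
for any piecewise `C¹` lift `U` of the flag component `W`; in particular the
right-hand side does not depend on the choice of the lift.

The cell `M(r; K)` (`K ⊆ {1, …, n}` nonempty, `r = |K|`) consists of the weighted
flags whose weights are positive exactly on `K`; its flag component lives in
`F_{I(K)} = O(n)/O(I(K))`, where `O(I(K))` is the block-diagonal subgroup of `O(n)`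
determined by the cuts at the elements of `K`.  We formalize the lift-independence of
the length formula, which is the mathematical content of the statement (and is what
makes `L_g` well defined on paths of the cell).
-/

open Matrix Filter Topology

/-- Length of a `C¹` piece on `[s,e]` computed from the weight path `μ` and a lift `U`
of the flag component:
`∫ √(|μ′(t)|² + ∑_{i<j} f(μ_{i→j}(t))² (U(t)ᵀU′(t))_{ij}²) dt`. -/
noncomputable def flagPieceLen {n : ℕ} (f : (Fin n → ℝ) → ℝ) (s e : ℝ)
    (μ : ℝ → Fin n → ℝ) (U : ℝ → OG n) : ℝ :=
  ∫ t in s..e, Real.sqrt (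
    (∑ k : Fin n, (derivWithin (fun r => μ r k) (Set.Icc s e) t)^2) +
    ∑ i : Fin n, ∑ j : Fin n,
      if (i : ℕ) < (j : ℕ) then
        (f (trunc (μ t) i j))^2 *
          (∑ l : Fin n, (U t : Matrix (Fin n) (Fin n) ℝ) l i *
            derivWithin (fun r => (U r : Matrix (Fin n) (Fin n) ℝ) l j) (Set.Icc s e) t)^2
      else 0)

namespace WFAux
open Matrix
variable {n : ℕ}

lemma orth_facts (g : OG n) :
    (g : Matrix (Fin n) (Fin n) ℝ)ᵀ * (g : Matrix (Fin n) (Fin n) ℝ) = 1 ∧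
    (g : Matrix (Fin n) (Fin n) ℝ) * (g : Matrix (Fin n) (Fin n) ℝ)ᵀ = 1 := by
  have hstar : star (g : Matrix (Fin n) (Fin n) ℝ) = (g : Matrix (Fin n) (Fin n) ℝ)ᵀ := by
    rw [Matrix.star_eq_conjTranspose]
    ext a b
    simp [Matrix.conjTranspose_apply]
  have h1 := g.2
  rw [Matrix.mem_orthogonalGroup_iff] at h1
  have h2 := g.2
  rw [Matrix.mem_orthogonalGroup_iff'] at h2
  exact ⟨h2, h1⟩



variable {n : ℕ}

lemma cut_of_not_sameBlock {c : Fin n → Prop} {i j : Fin n} (h : ¬ sameBlock c i j)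
    (hij : (i : ℕ) < (j : ℕ)) : ∃ k : Fin n, c k ∧ (i : ℕ) ≤ (k : ℕ) ∧ (k : ℕ) < (j : ℕ) := by
  simp only [sameBlock, not_forall] at h
  obtain ⟨k, hk, hiff⟩ := h
  rcases em ((j : ℕ) ≤ (k : ℕ)) with hj | hj
  · rcases em ((i : ℕ) ≤ (k : ℕ)) with hi | hi
    · exact absurd (iff_of_true hi hj) hiff
    · exact absurd (by omega) hi
  · rcases em ((i : ℕ) ≤ (k : ℕ)) with hi | hi
    · exact ⟨k, hk, hi, by omega⟩
    · exact absurd (iff_of_false hi hj) hiff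

lemma lt_of_blocks {c : Fin n → Prop} {q p i j : Fin n} (hqp : ¬ sameBlock c q p)
    (hq : (q : ℕ) < (p : ℕ)) (hqi : sameBlock c q i) (hpj : sameBlock c p j) :
    (i : ℕ) < (j : ℕ) := by
  obtain ⟨k, hk, h1, h2⟩ := cut_of_not_sameBlock hqp hq
  have hik : (i : ℕ) ≤ (k : ℕ) := (hqi k hk).mp h1
  have hjk : ¬ (j : ℕ) ≤ (k : ℕ) := fun hj => by
    have := (hpj k hk).mpr hj; omega
  omega

lemma trunc_congr {c : Fin n → Prop} {μ : Fin n → ℝ} (hμ : ∀ l, μ l ≠ 0 → c l)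
    {p q i j : Fin n} (hpi : sameBlock c p i) (hqj : sameBlock c q j) :
    trunc μ p q = trunc μ i j := by
  funext l
  by_cases hl : μ l = 0
  · simp only [trunc]; split_ifs <;> simp [hl]
  · have hc := hμ l hl
    have h1 := hpi l hc
    have h2 := hqj l hc
    simp only [trunc]
    have : ((p : ℕ) ≤ (l : ℕ) ∧ (l : ℕ) < (q : ℕ)) ↔ ((i : ℕ) ≤ (l : ℕ) ∧ (l : ℕ) < (j : ℕ)) := by
      constructor <;> intro hh <;> exact ⟨by omega, by omega⟩
    rw [if_congr this rfl rfl]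

lemma trunc_zero_of_ge {μ : Fin n → ℝ} {i j : Fin n} (h : ¬ (i : ℕ) < (j : ℕ)) :
    trunc μ i j = 0 := by
  funext l; simp only [trunc, Pi.zero_apply]
  rw [if_neg]; omega

lemma trunc_zero_of_sameBlock {c : Fin n → Prop} {μ : Fin n → ℝ}
    (hμ : ∀ l, μ l ≠ 0 → c l) {i j : Fin n} (h : sameBlock c i j) : trunc μ i j = 0 := by
  funext l; simp only [trunc, Pi.zero_apply]
  split_ifs with hcond
  · by_contra hne
    have := h l (hμ l hne)
    omega
  · rfl

lemma sq_sum_eq_trace (M : Matrix (Fin n) (Fin n) ℝ) :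
    ∑ i : Fin n, ∑ j : Fin n, (M i j) ^ 2 = (Mᵀ * M).trace := by
  simp only [Matrix.trace, Matrix.diag, Matrix.mul_apply, Matrix.transpose_apply, sq]
  exact Finset.sum_comm

lemma frobenius_conj (S A : Matrix (Fin n) (Fin n) ℝ) (h : S * Sᵀ = 1) :
    ∑ i : Fin n, ∑ j : Fin n, ((Sᵀ * A * S) i j) ^ 2
      = ∑ i : Fin n, ∑ j : Fin n, (A i j) ^ 2 := by
  rw [sq_sum_eq_trace, sq_sum_eq_trace]
  have hT : (Sᵀ * A * S)ᵀ * (Sᵀ * A * S) = (Sᵀ * (Aᵀ * A)) * S := by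
    have : (Sᵀ * A * S)ᵀ = Sᵀ * Aᵀ * S := by
      simp [Matrix.transpose_mul, Matrix.mul_assoc]
    rw [this]
    calc Sᵀ * Aᵀ * S * (Sᵀ * A * S)
        = Sᵀ * Aᵀ * ((S * Sᵀ) * (A * S)) := by simp only [Matrix.mul_assoc]
      _ = Sᵀ * (Aᵀ * A) * S := by rw [h]; simp only [Matrix.one_mul, Matrix.mul_assoc]
  rw [hT, Matrix.trace_mul_comm (Sᵀ * (Aᵀ * A)) S, ← Matrix.mul_assoc, h, Matrix.one_mul]



lemma core (f : (Fin n → ℝ) → ℝ) (hf0 : f 0 = 0) (c : Fin n → Prop)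
    (μt : Fin n → ℝ) (hμ : ∀ l, μt l ≠ 0 → c l)
    (Uc Vc Sc DU DV DS : Matrix (Fin n) (Fin n) ℝ)
    (hUo : Ucᵀ * Uc = 1) (hSo : Sc * Scᵀ = 1)
    (hSblock : ∀ p q, ¬ sameBlock c p q → Sc p q = 0)
    (hDSblock : ∀ p q, ¬ sameBlock c p q → DS p q = 0)
    (hV : Vc = Uc * Sc) (hDV : DV = DU * Sc + Uc * DS) :
    ∑ i : Fin n, ∑ j : Fin n,
      (if (i : ℕ) < (j : ℕ) then (f (trunc μt i j)) ^ 2 * ((Vcᵀ * DV) i j) ^ 2 else 0)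
    = ∑ i : Fin n, ∑ j : Fin n,
      (if (i : ℕ) < (j : ℕ) then (f (trunc μt i j)) ^ 2 * ((Ucᵀ * DU) i j) ^ 2 else 0) := by
  set A : Matrix (Fin n) (Fin n) ℝ := Ucᵀ * DU with hA
  have hB : Vcᵀ * DV = Scᵀ * A * Sc + Scᵀ * DS := by
    rw [hV, hDV, Matrix.transpose_mul, Matrix.mul_add]
    congr 1
    · calc Scᵀ * Ucᵀ * (DU * Sc) = Scᵀ * (Ucᵀ * DU) * Sc := by
            simp only [Matrix.mul_assoc]
        _ = Scᵀ * A * Sc := by rw [hA]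
    · calc Scᵀ * Ucᵀ * (Uc * DS) = Scᵀ * ((Ucᵀ * Uc) * DS) := by
            simp only [Matrix.mul_assoc]
        _ = Scᵀ * DS := by rw [hUo, Matrix.one_mul]
  set At : Matrix (Fin n) (Fin n) ℝ :=
    Matrix.of (fun p q => f (trunc μt p q) * A p q) with hAt
  have hAt0 : ∀ p q : Fin n, (¬ (p : ℕ) < (q : ℕ)) ∨ sameBlock c p q → At p q = 0 := by
    intro p q hpq
    have hf : f (trunc μt p q) = 0 := by
      rcases hpq with h | h
      · rw [trunc_zero_of_ge h, hf0]
      · by_cases hlt : (p : ℕ) < (q : ℕ)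
        · rw [trunc_zero_of_sameBlock hμ h, hf0]
        · rw [trunc_zero_of_ge hlt, hf0]
    simp [hAt, hf]
  -- expansion of (Scᵀ * X * Sc) i j
  have hexp : ∀ (X : Matrix (Fin n) (Fin n) ℝ) (i j : Fin n),
      (Scᵀ * X * Sc) i j = ∑ p : Fin n, ∑ q : Fin n, Sc q i * X q p * Sc p j := by
    intro X i j
    simp only [Matrix.mul_apply, Matrix.transpose_apply, Finset.sum_mul]
  have key1 : ∀ i j : Fin n, (i : ℕ) < (j : ℕ) →
      f (trunc μt i j) * (Vcᵀ * DV) i j = (Scᵀ * At * Sc) i j := by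
    intro i j hij
    rw [hB]
    have hadd : (Scᵀ * A * Sc + Scᵀ * DS) i j = (Scᵀ * A * Sc) i j + (Scᵀ * DS) i j := rfl
    rw [hadd, mul_add]
    have hvert : f (trunc μt i j) * (Scᵀ * DS) i j = 0 := by
      by_cases hb : sameBlock c i j
      · rw [trunc_zero_of_sameBlock hμ hb, hf0, zero_mul]
      · have hz : (Scᵀ * DS) i j = 0 := by
          rw [Matrix.mul_apply]
          apply Finset.sum_eq_zero; intro p _
          rw [Matrix.transpose_apply]
          by_cases hpi : sameBlock c p i
          · rw [hDSblock p j (fun h => hb ((hpi.symm).trans h)), mul_zero]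
          · rw [hSblock p i hpi, zero_mul]
        rw [hz, mul_zero]
    rw [hvert, add_zero, hexp At i j, hexp A i j, Finset.mul_sum]
    apply Finset.sum_congr rfl; intro p _
    rw [Finset.mul_sum]
    apply Finset.sum_congr rfl; intro q _
    by_cases hqi : sameBlock c q i
    · by_cases hpj : sameBlock c p j
      · by_cases hb : sameBlock c i j
        · have hqp : sameBlock c q p := (hqi.trans hb).trans hpj.symm
          have h1 : f (trunc μt i j) = 0 := by
            rw [trunc_zero_of_sameBlock hμ hb, hf0]
          have h2 : At q p = 0 := hAt0 q p (Or.inr hqp)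
          rw [h1, h2]; ring
        · have heq : trunc μt q p = trunc μt i j := trunc_congr hμ hqi hpj
          show f (trunc μt i j) * (Sc q i * A q p * Sc p j)
              = Sc q i * (f (trunc μt q p) * A q p) * Sc p j
          rw [heq]; ring
      · rw [hSblock p j hpj]; ring
    · rw [hSblock q i hqi]; ring
  have key2 : ∀ i j : Fin n, ¬ (i : ℕ) < (j : ℕ) → (Scᵀ * At * Sc) i j = 0 := by
    intro i j hij
    rw [hexp At i j]
    apply Finset.sum_eq_zero; intro p _
    apply Finset.sum_eq_zero; intro q _
    by_cases hqi : sameBlock c q i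
    · by_cases hpj : sameBlock c p j
      · have hz : At q p = 0 := by
          apply hAt0
          by_cases h1 : (q : ℕ) < (p : ℕ)
          · by_cases h2 : sameBlock c q p
            · exact Or.inr h2
            · exact absurd (lt_of_blocks h2 h1 hqi hpj) hij
          · exact Or.inl h1
        rw [hz]; ring
      · rw [hSblock p j hpj]; ring
    · rw [hSblock q i hqi]; ring
  calc ∑ i : Fin n, ∑ j : Fin n,
        (if (i : ℕ) < (j : ℕ) then (f (trunc μt i j)) ^ 2 * ((Vcᵀ * DV) i j) ^ 2 else 0)
      = ∑ i : Fin n, ∑ j : Fin n, ((Scᵀ * At * Sc) i j) ^ 2 := by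
        apply Finset.sum_congr rfl; intro i _
        apply Finset.sum_congr rfl; intro j _
        split_ifs with h
        · rw [← key1 i j h, mul_pow]
        · rw [key2 i j h]; ring
    _ = ∑ i : Fin n, ∑ j : Fin n, (At i j) ^ 2 := frobenius_conj Sc At hSo
    _ = ∑ i : Fin n, ∑ j : Fin n,
        (if (i : ℕ) < (j : ℕ) then (f (trunc μt i j)) ^ 2 * ((Ucᵀ * DU) i j) ^ 2 else 0) := by
        apply Finset.sum_congr rfl; intro i _
        apply Finset.sum_congr rfl; intro j _
        split_ifs with h
        · show (f (trunc μt i j) * A i j) ^ 2 = _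
          rw [mul_pow, hA]
        · rw [hAt0 i j (Or.inl h)]; ring


set_option maxHeartbeats 2000000 in
lemma piece_eq (f : (Fin n → ℝ) → ℝ) (hf0 : f 0 = 0) (K : Finset (Fin n))
    {s e : ℝ} (hse : s < e) (μ : ℝ → Fin n → ℝ)
    (hμ : ∀ t ∈ Set.Icc s e, ∀ l, μ t l ≠ 0 → l ∈ K)
    (U V : ℝ → OG n)
    (hUV : ∀ t ∈ Set.Icc s e,
      (QuotientGroup.mk (U t) : OG n ⧸ blockSubgroup (· ∈ K)) = QuotientGroup.mk (V t))
    (hUC : ContDiffOn ℝ 1 (fun t k l => (U t : Matrix (Fin n) (Fin n) ℝ) k l) (Set.Icc s e))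
    (hVC : ContDiffOn ℝ 1 (fun t k l => (V t : Matrix (Fin n) (Fin n) ℝ) k l) (Set.Icc s e)) :
    flagPieceLen f s e μ U = flagPieceLen f s e μ V := by
  unfold flagPieceLen
  apply intervalIntegral.integral_congr
  intro t ht
  rw [Set.uIcc_of_le hse.le] at ht
  set T := Set.Icc s e with hT
  have huniq : UniqueDiffOn ℝ T := uniqueDiffOn_Icc hse
  refine congrArg Real.sqrt (congrArg (_ + ·) ?_)
  -- the weighted sums agree: apply `core`
  set SM : ℝ → Matrix (Fin n) (Fin n) ℝ :=
    fun r => (U r : Matrix (Fin n) (Fin n) ℝ)ᵀ * (V r : Matrix (Fin n) (Fin n) ℝ) with hSM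
  have hSMgrp : ∀ r, SM r = ((((U r)⁻¹ * V r : OG n)) : Matrix (Fin n) (Fin n) ℝ) := by
    intro r
    have h1 : ((((U r)⁻¹ * V r : OG n)) : Matrix (Fin n) (Fin n) ℝ)
        = (((U r)⁻¹ : OG n) : Matrix (Fin n) (Fin n) ℝ) * (V r : Matrix (Fin n) (Fin n) ℝ) := rfl
    have h2 : (((U r)⁻¹ : OG n) : Matrix (Fin n) (Fin n) ℝ)
        = star (U r : Matrix (Fin n) (Fin n) ℝ) := Matrix.UnitaryGroup.inv_val (U r)
    have h3 : star (U r : Matrix (Fin n) (Fin n) ℝ) = (U r : Matrix (Fin n) (Fin n) ℝ)ᵀ := by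
      rw [Matrix.star_eq_conjTranspose]; ext a b; simp [Matrix.conjTranspose_apply]
    rw [hSM, h1, h2, h3]
  have hS0 : ∀ r ∈ T, ∀ p q : Fin n, ¬ sameBlock (· ∈ K) p q → SM r p q = 0 := by
    intro r hr p q hpq
    have hmem : ((U r)⁻¹ * V r : OG n) ∈ blockSubgroup (· ∈ K) :=
      QuotientGroup.eq.mp (hUV r hr)
    rw [hSMgrp r]
    exact hmem p q hpq
  have hUent : ∀ t' ∈ T, ∀ k l : Fin n,
      DifferentiableWithinAt ℝ (fun r => (U r : Matrix (Fin n) (Fin n) ℝ) k l) T t' := by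
    intro t' ht' k l
    have h := (hUC.differentiableOn one_ne_zero) t' ht'
    exact differentiableWithinAt_pi.mp (differentiableWithinAt_pi.mp h k) l
  have hVent : ∀ t' ∈ T, ∀ k l : Fin n,
      DifferentiableWithinAt ℝ (fun r => (V r : Matrix (Fin n) (Fin n) ℝ) k l) T t' := by
    intro t' ht' k l
    have h := (hVC.differentiableOn one_ne_zero) t' ht'
    exact differentiableWithinAt_pi.mp (differentiableWithinAt_pi.mp h k) l
  have hSent : ∀ k l : Fin n, DifferentiableWithinAt ℝ (fun r => SM r k l) T t := by
    intro k l
    have hfe : (fun r => SM r k l)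
        = fun r => ∑ a : Fin n, (U r : Matrix (Fin n) (Fin n) ℝ) a k *
            (V r : Matrix (Fin n) (Fin n) ℝ) a l := by
      funext r
      simp [hSM, Matrix.mul_apply]
    rw [hfe]
    exact DifferentiableWithinAt.fun_sum fun a _ =>
      ((hUent t ht a k).mul (hVent t ht a l))
  set DU : Matrix (Fin n) (Fin n) ℝ :=
    Matrix.of (fun k l => derivWithin (fun r => (U r : Matrix (Fin n) (Fin n) ℝ) k l) T t)
    with hDU
  set DV : Matrix (Fin n) (Fin n) ℝ :=
    Matrix.of (fun k l => derivWithin (fun r => (V r : Matrix (Fin n) (Fin n) ℝ) k l) T t)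
    with hDV
  set DS : Matrix (Fin n) (Fin n) ℝ :=
    Matrix.of (fun k l => derivWithin (fun r => SM r k l) T t) with hDS
  have hDUd : ∀ k l : Fin n,
      HasDerivWithinAt (fun r => (U r : Matrix (Fin n) (Fin n) ℝ) k l) (DU k l) T t :=
    fun k l => (hUent t ht k l).hasDerivWithinAt
  have hDSd : ∀ k l : Fin n, HasDerivWithinAt (fun r => SM r k l) (DS k l) T t :=
    fun k l => (hSent k l).hasDerivWithinAt
  have hVMeq : ∀ r, (V r : Matrix (Fin n) (Fin n) ℝ)
      = (U r : Matrix (Fin n) (Fin n) ℝ) * SM r := by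
    intro r
    rw [hSM, ← Matrix.mul_assoc, (orth_facts (U r)).2, Matrix.one_mul]
  have hDVf : DV = DU * SM t + (U t : Matrix (Fin n) (Fin n) ℝ) * DS := by
    ext k j
    have hsum : HasDerivWithinAt
        (fun r => ∑ m : Fin n, (U r : Matrix (Fin n) (Fin n) ℝ) k m * SM r m j)
        (∑ m : Fin n, (DU k m * SM t m j + (U t : Matrix (Fin n) (Fin n) ℝ) k m * DS m j))
        T t :=
      HasDerivWithinAt.fun_sum fun m _ => (hDUd k m).mul (hDSd m j)
    have hfe : (fun r => (V r : Matrix (Fin n) (Fin n) ℝ) k j)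
        = fun r => ∑ m : Fin n, (U r : Matrix (Fin n) (Fin n) ℝ) k m * SM r m j := by
      funext r
      rw [hVMeq r]
      simp [Matrix.mul_apply]
    have hkey : DV k j
        = ∑ m : Fin n, (DU k m * SM t m j + (U t : Matrix (Fin n) (Fin n) ℝ) k m * DS m j) := by
      show derivWithin (fun r => (V r : Matrix (Fin n) (Fin n) ℝ) k j) T t = _
      rw [hfe]
      exact hsum.derivWithin (huniq t ht)
    rw [hkey]
    simp [Matrix.mul_apply, Matrix.add_apply, Finset.sum_add_distrib]
  have hDSblock : ∀ p q : Fin n, ¬ sameBlock (· ∈ K) p q → DS p q = 0 := by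
    intro p q h
    have hz : Set.EqOn (fun r => SM r p q) (fun _ => (0 : ℝ)) T := fun r hr =>
      hS0 r hr p q h
    show derivWithin (fun r => SM r p q) T t = 0
    rw [derivWithin_congr hz (hz ht)]
    simp
  have hSo : SM t * (SM t)ᵀ = 1 := by
    rw [hSMgrp t]
    exact (orth_facts ((U t)⁻¹ * V t)).2
  have hcore := core f hf0 (· ∈ K) (μ t) (hμ t ht)
    (U t : Matrix (Fin n) (Fin n) ℝ) (V t : Matrix (Fin n) (Fin n) ℝ) (SM t) DU DV DS
    (orth_facts (U t)).1 hSo (hS0 t ht) hDSblock (hVMeq t) hDVf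
  simp only [hDU, hDV, Matrix.mul_apply, Matrix.transpose_apply, Matrix.of_apply] at hcore
  exact hcore.symm


end WFAux


/-- Standing hypotheses on the pinching function `f : [0,1]^n → ℝ₊`. -/
def PinchFun {n : ℕ} (f : (Fin n → ℝ) → ℝ) : Prop :=
  ContinuousOn f (Set.Icc (0 : Fin n → ℝ) 1) ∧
  ContDiffOn ℝ (⊤ : ℕ∞) f (Set.Icc (0 : Fin n → ℝ) 1 \ {0}) ∧
  (∀ x ∈ Set.Icc (0 : Fin n → ℝ) 1, 0 ≤ f x) ∧
  (∀ x ∈ Set.Icc (0 : Fin n → ℝ) 1, (f x = 0 ↔ x = 0))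

/-- **The length of a piecewise `C¹` path in a cell `M(r;K)` is given by the lift
formula, independently of the chosen lift** (Proposition 4.4 (iii) of the paper).
Let `γ = (μ, W) : [a,b] → M(r;K)` be a piecewise `C¹` path (partition points
`pt 0 = a < pt 1 < … < pt N = b`), and let `U` and `V` be two piecewise `C¹` lifts of
the flag component `W` to `O(n)` (i.e. `π_{I(K)}(U t) = W t = π_{I(K)}(V t)`).  Then
`∑ᵢ ∫ √(|μ′|² + ∑_{i<j} f(μ_{i→j})² (UᵀU′)_{ij}²)` computed with `U` and with `V`
agree: they both equal `L_g(γ)`. -/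
theorem cell_length_formula_lift_independent {n : ℕ} (f : (Fin n → ℝ) → ℝ)
    (hf : PinchFun f) (K : Finset (Fin n)) (hK : K.Nonempty)
    (N : ℕ) (hN : 0 < N) (pt : ℕ → ℝ) (hpt : ∀ i < N, pt i < pt (i + 1))
    (μ : ℝ → Fin n → ℝ) (U V : ℕ → ℝ → OG n)
    -- `γ` is piecewise `C¹` with values in the cell `M(r;K)`:
    (hμC : ∀ i < N, ContDiffOn ℝ 1 μ (Set.Icc (pt i) (pt (i + 1))))
    (hμΔ : ∀ t ∈ Set.Icc (pt 0) (pt N), (∀ k, 0 ≤ μ t k) ∧ ∑ k, μ t k = 1)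
    (hμK : ∀ t ∈ Set.Icc (pt 0) (pt N), ∀ k, (0 < μ t k ↔ k ∈ K))
    -- `U` and `V` are piecewise `C¹` lifts of the flag component:
    (hUC : ∀ i < N, ContDiffOn ℝ 1
      (fun t k l => (U i t : Matrix (Fin n) (Fin n) ℝ) k l) (Set.Icc (pt i) (pt (i + 1))))
    (hVC : ∀ i < N, ContDiffOn ℝ 1
      (fun t k l => (V i t : Matrix (Fin n) (Fin n) ℝ) k l) (Set.Icc (pt i) (pt (i + 1))))
    (hUV : ∀ i < N, ∀ t ∈ Set.Icc (pt i) (pt (i + 1)),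
      (QuotientGroup.mk (U i t) : OG n ⧸ blockSubgroup (· ∈ K)) = QuotientGroup.mk (V i t))
    -- both lifts induce the same continuous path `W` in `F_{I(K)}`:
    (hUj : ∀ i, i + 1 < N →
      (QuotientGroup.mk (U i (pt (i + 1))) : OG n ⧸ blockSubgroup (· ∈ K)) =
        QuotientGroup.mk (U (i + 1) (pt (i + 1)))) :
    ∑ i ∈ Finset.range N, flagPieceLen f (pt i) (pt (i + 1)) μ (U i) =
      ∑ i ∈ Finset.range N, flagPieceLen f (pt i) (pt (i + 1)) μ (V i) := by
  have hf0 : f 0 = 0 := (hf.2.2.2 0 ⟨le_refl _, zero_le_one⟩).mpr rfl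
  have hmono : ∀ a b : ℕ, a ≤ b → b ≤ N → pt a ≤ pt b := by
    intro a b hab hbN
    induction b with
    | zero => simp [Nat.le_zero.mp hab]
    | succ m ih =>
      rcases Nat.lt_succ_iff_lt_or_eq.mp (Nat.lt_succ_of_le hab) with h | h
      · exact le_trans (ih (by omega) (by omega)) (hpt m (by omega)).le
      · rw [h]
  apply Finset.sum_congr rfl
  intro i hi
  have hiN : i < N := Finset.mem_range.mp hi
  have hse := hpt i hiN
  apply WFAux.piece_eq f hf0 K hse μ ?_ (U i) (V i) (hUV i hiN) (hUC i hiN) (hVC i hiN)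
  intro t ht l hl
  have hsub : t ∈ Set.Icc (pt 0) (pt N) :=
    ⟨le_trans (hmono 0 i (by omega) (by omega)) ht.1,
     le_trans ht.2 (hmono (i + 1) N (by omega) (by omega))⟩
  have hpos : 0 < μ t l := lt_of_le_of_ne ((hμΔ t hsub).1 l) (Ne.symm hl)
  exact (hμK t hsub l).mp hpos
end

section
/- The length structure L_{WF} (defined on concatenations of piecewise C¹ paths each lying in the closure of a single elementary cell M(|K_i|;K_i)) extends the length structure L_{M̄} (defined on piecewise C¹ paths whose open pieces lie in the top cell M(n)), and the induced distances coincide: d_{WF} = d_{M̄} on WF(n). -/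
open Matrix Filter Topology

/-- A chain of (to-be) `C¹` pieces in `Δ(n) × O(n)`: `N` pieces, partition points
`pt 0 < pt 1 < … < pt N`, and on the `i`-th interval the lifted piece `γ i`. -/
structure WFChain (n : ℕ) where
  N : ℕ
  pt : ℕ → ℝ
  γ : ℕ → ℝ → Del n × OG n

namespace WFChain

variable {n : ℕ} (c : WFChain n)

/-- Admissibility: at least one piece, strictly increasing partition points, each piece
`C¹` on its closed subinterval, consecutive pieces matching in `WF(n)` (so that the
induced path in `WF(n)` is continuous). -/
def Pieces : Prop :=
  0 < c.N ∧ (∀ i < c.N, c.pt i < c.pt (i + 1)) ∧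
  (∀ i < c.N, ContDiffOn ℝ 1 (fun t => ((c.γ i t).1 : Fin n → ℝ))
      (Set.Icc (c.pt i) (c.pt (i + 1)))) ∧
  (∀ i < c.N, ContDiffOn ℝ 1 (fun t k l => ((c.γ i t).2 : Matrix (Fin n) (Fin n) ℝ) k l)
      (Set.Icc (c.pt i) (c.pt (i + 1)))) ∧
  (∀ i, i + 1 < c.N → mkWF (c.γ i (c.pt (i + 1))) = mkWF (c.γ (i + 1) (c.pt (i + 1))))

/-- The open pieces lie in the top cell `M(n)` (Definition I of piecewise `C¹` paths
in `WF(n)`). -/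
def InteriorTop : Prop :=
  ∀ i < c.N, ∀ t ∈ Set.Ioo (c.pt i) (c.pt (i + 1)), ∀ k, 0 < ((c.γ i t).1 : Fin n → ℝ) k

/-- The whole chain lies in the top cell `M(n)` (paths used for the Riemannian
distance `d_g` of `(M(n), g)`). -/
def InTop : Prop :=
  ∀ i < c.N, ∀ t ∈ Set.Icc (c.pt i) (c.pt (i + 1)), ∀ k, 0 < ((c.γ i t).1 : Fin n → ℝ) k

/-- Each open piece lies in a single elementary cell `M(|K|; K)`, the closed piece in
its closure (Definition II of piecewise `C¹` paths in `WF(n)`). -/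
def InCells : Prop :=
  ∀ i < c.N, ∃ K : Finset (Fin n), K.Nonempty ∧
    (∀ t ∈ Set.Ioo (c.pt i) (c.pt (i + 1)), ∀ k, (0 < ((c.γ i t).1 : Fin n → ℝ) k ↔ k ∈ K)) ∧
    (∀ t ∈ Set.Icc (c.pt i) (c.pt (i + 1)), ∀ k, k ∉ K → ((c.γ i t).1 : Fin n → ℝ) k = 0)

/-- Starting point (in `WF(n)`) of the chain. -/
def src : WF n := mkWF (c.γ 0 (c.pt 0))

/-- End point (in `WF(n)`) of the chain. -/
def tgt : WF n := mkWF (c.γ (c.N - 1) (c.pt c.N))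

/-- The total length of the chain w.r.t. the pinching function `f`. -/
noncomputable def len (f : (Fin n → ℝ) → ℝ) : ℝ :=
  ∑ i ∈ Finset.range c.N,
    flagPieceLen f (c.pt i) (c.pt (i + 1)) (fun t => ((c.γ i t).1 : Fin n → ℝ))
      (fun t => (c.γ i t).2)

end WFChain

/-- Lengths of piecewise `C¹` paths (Definition I: open pieces in `M(n)`) from `x` to
`y` in `WF(n)`. -/
def lensM {n : ℕ} (f : (Fin n → ℝ) → ℝ) (x y : WF n) : Set ℝ :=
  {L | ∃ c : WFChain n, c.Pieces ∧ c.InteriorTop ∧ c.src = x ∧ c.tgt = y ∧ L = c.len f}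

/-- Lengths of piecewise `C¹` paths lying in `M(n)` from `x` to `y`. -/
def lensg {n : ℕ} (f : (Fin n → ℝ) → ℝ) (x y : WF n) : Set ℝ :=
  {L | ∃ c : WFChain n, c.Pieces ∧ c.InTop ∧ c.src = x ∧ c.tgt = y ∧ L = c.len f}

/-- Lengths of piecewise `C¹` paths (Definition II: pieces in the closures of single
elementary cells) from `x` to `y` in `WF(n)`. -/
def lensWF {n : ℕ} (f : (Fin n → ℝ) → ℝ) (x y : WF n) : Set ℝ :=
  {L | ∃ c : WFChain n, c.Pieces ∧ c.InCells ∧ c.src = x ∧ c.tgt = y ∧ L = c.len f}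

/-- The distance `d_{M̄}` on `WF(n)`. -/
noncomputable def dM {n : ℕ} (f : (Fin n → ℝ) → ℝ) (x y : WF n) : ℝ :=
  sInf (lensM f x y)

/-- The Riemannian distance `d_g` of `(M(n), g)`. -/
noncomputable def dg {n : ℕ} (f : (Fin n → ℝ) → ℝ) (x y : WF n) : ℝ :=
  sInf (lensg f x y)

/-- The distance `d_{WF}` on `WF(n)`. -/
noncomputable def dWF {n : ℕ} (f : (Fin n → ℝ) → ℝ) (x y : WF n) : ℝ :=
  sInf (lensWF f x y)

/-- A point of `WF(n)` belongs to the top cell `M(n)` (all weights positive). -/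
def inTop {n : ℕ} (x : WF n) : Prop :=
  ∃ p : Del n × OG n, mkWF p = x ∧ ∀ k, 0 < (p.1 : Fin n → ℝ) k

open Matrix Filter Topology Set

noncomputable def bump (a b e t : ℝ) : ℝ :=
  e * ((max a (min b t) - a) * (b - max a (min b t)))

lemma bump_nonneg {a b e : ℝ} (t : ℝ) (he : 0 ≤ e) : 0 ≤ bump a b e t := by
  rcases le_or_gt a b with hab | hab
  · have h1 : a ≤ max a (min b t) := le_max_left _ _
    have h2 : max a (min b t) ≤ b := max_le hab (min_le_left _ _)
    exact mul_nonneg he (mul_nonneg (by linarith) (by linarith))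
  · unfold bump
    rw [max_eq_left ((min_le_left _ _).trans hab.le)]
    simp

lemma bump_le {a b e : ℝ} (t : ℝ) (he : 0 ≤ e) : bump a b e t ≤ e * (b - a) ^ 2 := by
  rcases le_or_gt a b with hab | hab
  · have h1 : a ≤ max a (min b t) := le_max_left _ _
    have h2 : max a (min b t) ≤ b := max_le hab (min_le_left _ _)
    have : (max a (min b t) - a) * (b - max a (min b t)) ≤ (b - a) ^ 2 := by nlinarith
    unfold bump; nlinarith
  · have : max a (min b t) = a := max_eq_left ((min_le_left _ _).trans hab.le)
    unfold bump; rw [this]; simp; positivity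

lemma bump_left (a b e : ℝ) : bump a b e a = 0 := by
  rcases le_or_gt a b with hab | hab
  · unfold bump; rw [min_eq_right hab, max_self]; ring
  · unfold bump; rw [max_eq_left ((min_le_left _ _).trans hab.le)]; ring

lemma bump_right (a b e : ℝ) : bump a b e b = 0 := by
  rcases le_or_gt a b with hab | hab
  · unfold bump; rw [min_self, max_eq_right hab]; ring
  · unfold bump; rw [max_eq_left ((min_le_left _ _).trans hab.le)]; ring

lemma bump_eqOn {a b e : ℝ} : Set.EqOn (bump a b e) (fun t => e * ((t - a) * (b - t))) (Set.Icc a b) := by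
  intro t ht
  unfold bump
  rw [min_eq_right ht.2, max_eq_right ht.1]

lemma bump_pos {a b e t : ℝ} (he : 0 < e) (ht : t ∈ Set.Ioo a b) : 0 < bump a b e t := by
  rw [bump_eqOn (Set.mem_Icc.mpr ⟨ht.1.le, ht.2.le⟩)]
  have h1 := ht.1; have h2 := ht.2
  have : 0 < (t - a) * (b - t) := mul_pos (by linarith) (by linarith)
  exact mul_pos he this

lemma bump_continuous {a b e : ℝ} : Continuous (bump a b e) := by
  unfold bump; fun_prop

lemma simplex_coord_le_one {n : ℕ} {v : Fin n → ℝ} (h0 : ∀ i, 0 ≤ v i) (h1 : ∑ i, v i = 1)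
    (k : Fin n) : v k ≤ 1 := by
  rw [← h1]
  exact Finset.single_le_sum (fun i _ => h0 i) (Finset.mem_univ k)

lemma del_pos {n : ℕ} (v : {v : Fin n → ℝ // (∀ i, 0 ≤ v i) ∧ ∑ i, v i = 1}) : 0 < n := by
  rcases Nat.eq_zero_or_pos n with h | h
  · exfalso; have := v.2.2; subst h; simp at this
  · exact h

lemma exists_unif_bound {ι : Type*} [Fintype ι] {S : Set ℝ} (hS : IsCompact S)
    (g : ι → ℝ → ℝ) (hg : ∀ i, ContinuousOn (g i) S) :
    ∃ M : ℝ, 0 ≤ M ∧ ∀ i, ∀ t ∈ S, |g i t| ≤ M := by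
  choose C hC using fun i => hS.exists_bound_of_continuousOn (hg i)
  refine ⟨∑ i, |C i|, by positivity, fun i t ht => ?_⟩
  calc |g i t| ≤ C i := by simpa [Real.norm_eq_abs] using hC i t ht
    _ ≤ |C i| := le_abs_self _
    _ ≤ ∑ i, |C i| := Finset.single_le_sum (f := fun j => |C j|) (fun j _ => abs_nonneg _) (Finset.mem_univ i)

lemma sqrt_add_le (x r : ℝ) (hr : 0 ≤ r) : Real.sqrt (x + r) ≤ Real.sqrt x + Real.sqrt r := by
  rcases le_or_gt x 0 with hx | hx
  · calc Real.sqrt (x + r) ≤ Real.sqrt r := Real.sqrt_le_sqrt (by linarith)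
      _ ≤ Real.sqrt x + Real.sqrt r := by have := Real.sqrt_nonneg x; linarith
  · rw [show x + r = x + r by rfl]
    have h1 : Real.sqrt x ^ 2 = x := Real.sq_sqrt hx.le
    have h2 : Real.sqrt r ^ 2 = r := Real.sq_sqrt hr
    rw [show x + r = (Real.sqrt x)^2 + (Real.sqrt r)^2 by rw [h1, h2]]
    have h3 : Real.sqrt x ≥ 0 := Real.sqrt_nonneg x
    have h4 : Real.sqrt r ≥ 0 := Real.sqrt_nonneg r
    calc Real.sqrt ((Real.sqrt x)^2 + (Real.sqrt r)^2)
        ≤ Real.sqrt ((Real.sqrt x + Real.sqrt r)^2) := Real.sqrt_le_sqrt (by nlinarith)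
      _ = Real.sqrt x + Real.sqrt r := Real.sqrt_sq (by linarith)
section Aux

noncomputable def pmu {n : ℕ} (a b e : ℝ) (μ : ℝ → Fin n → ℝ) (t : ℝ) : Fin n → ℝ :=
  fun k => (1 - bump a b e t) * μ t k + bump a b e t * (n : ℝ)⁻¹

lemma pmu_mem_unit {n : ℕ} (hn : 0 < n) {a b e : ℝ} (he : 0 ≤ e) (he1 : e * (b - a) ^ 2 ≤ 1)
    {μ : ℝ → Fin n → ℝ} (hμ0 : ∀ t k, 0 ≤ μ t k) (hμ1 : ∀ t k, μ t k ≤ 1) (t : ℝ) (k : Fin n) :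
    0 ≤ pmu a b e μ t k ∧ pmu a b e μ t k ≤ 1 := by
  have hd0 := bump_nonneg (a := a) (b := b) (e := e) t he
  have hd1 : bump a b e t ≤ 1 := (bump_le t he).trans he1
  have hnn : (0:ℝ) < (n : ℝ) := by exact_mod_cast hn
  have hi0 : (0:ℝ) ≤ (n:ℝ)⁻¹ := by positivity
  have hi1 : ((n:ℝ))⁻¹ ≤ 1 := by
    rw [inv_le_one_iff₀]; right; exact_mod_cast hn
  have h0 := hμ0 t k; have h1 := hμ1 t k
  constructor
  · have : 0 ≤ (1 - bump a b e t) * μ t k := mul_nonneg (by linarith) h0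
    have : 0 ≤ bump a b e t * (n:ℝ)⁻¹ := mul_nonneg hd0 hi0
    unfold pmu; linarith
  · unfold pmu; nlinarith

lemma pmu_sum {n : ℕ} (hn : 0 < n) {a b e : ℝ} {μ : ℝ → Fin n → ℝ} (t : ℝ)
    (hμs : ∑ k, μ t k = 1) : ∑ k, pmu a b e μ t k = 1 := by
  unfold pmu
  rw [Finset.sum_add_distrib, ← Finset.mul_sum, hμs, Finset.sum_const, Finset.card_univ,
    Fintype.card_fin, nsmul_eq_mul]
  have hnn : (n:ℝ) ≠ 0 := by positivity
  field_simp
  ring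

lemma pmu_contDiffOn {n : ℕ} {a b e : ℝ} {μ : ℝ → Fin n → ℝ}
    (hμ : ContDiffOn ℝ 1 μ (Set.Icc a b)) :
    ContDiffOn ℝ 1 (pmu a b e μ) (Set.Icc a b) := by
  have hq : ContDiff ℝ 1 (fun t : ℝ => e * ((t - a) * (b - t))) := by fun_prop
  have H : ContDiffOn ℝ 1
      (fun t k => (1 - e * ((t - a) * (b - t))) * μ t k + e * ((t - a) * (b - t)) * (n:ℝ)⁻¹)
      (Set.Icc a b) := by
    rw [contDiffOn_pi]; intro k
    exact ((contDiff_const.sub hq).contDiffOn.mul (contDiffOn_pi.mp hμ k)).add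
      (hq.contDiffOn.mul contDiffOn_const)
  refine H.congr fun t ht => ?_
  unfold pmu
  rw [bump_eqOn ht]

/-- The perturbed chain: same partition, same flag lifts, weights pinched into the
interior of the simplex by a bump vanishing at the partition points. -/
noncomputable def perturb {n : ℕ} (hn : 0 < n) (c : WFChain n) (e : ℕ → ℝ)
    (he0 : ∀ i, 0 ≤ e i) (he1 : ∀ i, e i * (c.pt (i + 1) - c.pt i) ^ 2 ≤ 1) : WFChain n where
  N := c.N
  pt := c.pt
  γ := fun i t =>
    (⟨pmu (c.pt i) (c.pt (i + 1)) (e i) (fun r => ((c.γ i r).1 : Fin n → ℝ)) t,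
      fun k => (pmu_mem_unit hn (he0 i) (he1 i)
        (fun r k => (c.γ i r).1.2.1 k)
        (fun r k => simplex_coord_le_one (c.γ i r).1.2.1 (c.γ i r).1.2.2 k) t k).1,
      pmu_sum hn t (c.γ i t).1.2.2⟩, (c.γ i t).2)

variable {n : ℕ} (hn : 0 < n) (c : WFChain n) (e : ℕ → ℝ)
  (he0 : ∀ i, 0 ≤ e i) (he1 : ∀ i, e i * (c.pt (i + 1) - c.pt i) ^ 2 ≤ 1)

lemma perturb_γ_left (i : ℕ) :
    (perturb hn c e he0 he1).γ i (c.pt i) = c.γ i (c.pt i) := by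
  refine Prod.ext ?_ rfl
  apply Subtype.ext
  funext k
  show pmu (c.pt i) (c.pt (i + 1)) (e i) (fun r => ((c.γ i r).1 : Fin n → ℝ)) (c.pt i) k
    = ((c.γ i (c.pt i)).1 : Fin n → ℝ) k
  unfold pmu
  rw [bump_left]
  ring

lemma perturb_γ_right (i : ℕ) :
    (perturb hn c e he0 he1).γ i (c.pt (i + 1)) = c.γ i (c.pt (i + 1)) := by
  refine Prod.ext ?_ rfl
  apply Subtype.ext
  funext k
  show pmu (c.pt i) (c.pt (i + 1)) (e i) (fun r => ((c.γ i r).1 : Fin n → ℝ)) (c.pt (i + 1)) k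
    = ((c.γ i (c.pt (i + 1))).1 : Fin n → ℝ) k
  unfold pmu
  rw [bump_right]
  ring

lemma perturb_pieces (hP : c.Pieces) : (perturb hn c e he0 he1).Pieces := by
  obtain ⟨h0, hpt, hμ, hU, hm⟩ := hP
  refine ⟨h0, hpt, ?_, hU, ?_⟩
  · intro i hi
    exact pmu_contDiffOn (hμ i hi)
  · intro i hi
    rw [show (perturb hn c e he0 he1).pt = c.pt from rfl,
      perturb_γ_right hn c e he0 he1 i, perturb_γ_left hn c e he0 he1 (i + 1)]
    exact hm i hi

lemma perturb_interiorTop (he2 : ∀ i < c.N, 0 < e i) :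
    (perturb hn c e he0 he1).InteriorTop := by
  intro i hi t ht k
  have hd : 0 < bump (c.pt i) (c.pt (i + 1)) (e i) t := bump_pos (he2 i hi) ht
  have hd1 : bump (c.pt i) (c.pt (i + 1)) (e i) t ≤ 1 := (bump_le t (he0 i)).trans (he1 i)
  have hμ0 : 0 ≤ ((c.γ i t).1 : Fin n → ℝ) k := (c.γ i t).1.2.1 k
  have hnn : (0:ℝ) < (n : ℝ) := by exact_mod_cast hn
  have hi0 : (0:ℝ) < (n:ℝ)⁻¹ := by positivity
  have key : 0 < (1 - bump (c.pt i) (c.pt (i + 1)) (e i) t) * ((c.γ i t).1 : Fin n → ℝ) k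
      + bump (c.pt i) (c.pt (i + 1)) (e i) t * (n:ℝ)⁻¹ := by nlinarith
  exact key

lemma perturb_src : (perturb hn c e he0 he1).src = c.src := by
  unfold WFChain.src
  rw [show (perturb hn c e he0 he1).pt = c.pt from rfl, perturb_γ_left hn c e he0 he1 0]

lemma perturb_tgt (h0 : 0 < c.N) : (perturb hn c e he0 he1).tgt = c.tgt := by
  unfold WFChain.tgt
  have hN : c.N - 1 + 1 = c.N := by omega
  rw [show (perturb hn c e he0 he1).pt = c.pt from rfl,
    show (perturb hn c e he0 he1).N = c.N from rfl]
  rw [show c.pt c.N = c.pt (c.N - 1 + 1) by rw [hN]]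
  rw [perturb_γ_right hn c e he0 he1 (c.N - 1)]

lemma perturb_len (f : (Fin n → ℝ) → ℝ) :
    (perturb hn c e he0 he1).len f = ∑ i ∈ Finset.range c.N,
      flagPieceLen f (c.pt i) (c.pt (i + 1))
        (pmu (c.pt i) (c.pt (i + 1)) (e i) (fun r => ((c.γ i r).1 : Fin n → ℝ)))
        (fun t => (c.γ i t).2) := rfl

end Aux
section Aux2

lemma mem_box {n : ℕ} {x : Fin n → ℝ} (h : ∀ l, x l ∈ Set.Icc (0:ℝ) 1) :
    x ∈ Set.Icc (0 : Fin n → ℝ) 1 :=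
  Set.mem_Icc.mpr ⟨fun l => (h l).1, fun l => (h l).2⟩

lemma trunc_mem_box {n : ℕ} {v : Fin n → ℝ} (hv : ∀ k, v k ∈ Set.Icc (0:ℝ) 1) (i j : Fin n) :
    trunc v i j ∈ Set.Icc (0 : Fin n → ℝ) 1 := by
  apply mem_box
  intro l
  unfold trunc
  by_cases hl : (i : ℕ) ≤ (l : ℕ) ∧ (l : ℕ) < (j : ℕ)
  · rw [if_pos hl]; exact hv l
  · rw [if_neg hl]; exact Set.mem_Icc.mpr ⟨le_refl 0, zero_le_one⟩

lemma div_succ_mul_le {x c : ℝ} (hx : 0 ≤ x) (hc : 0 ≤ c) : x / (c + 1) * c ≤ x := by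
  rw [div_mul_eq_mul_div, div_le_iff₀ (by linarith : (0:ℝ) < c + 1)]
  nlinarith

lemma matrix_entry_contOn {n : ℕ} {U : ℝ → OG n} {s : Set ℝ}
    (hU : ContDiffOn ℝ 1 (fun t k l => ((U t : Matrix (Fin n) (Fin n) ℝ)) k l) s) (k l : Fin n) :
    ContDiffOn ℝ 1 (fun t => (U t : Matrix (Fin n) (Fin n) ℝ) k l) s :=
  contDiffOn_pi.mp (contDiffOn_pi.mp hU k) l

/-- The integrand of `flagPieceLen`. -/
noncomputable def pieceIntegrand {n : ℕ} (f : (Fin n → ℝ) → ℝ) (a b : ℝ)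
    (μ : ℝ → Fin n → ℝ) (U : ℝ → OG n) (t : ℝ) : ℝ :=
  Real.sqrt (
    (∑ k : Fin n, (derivWithin (fun r => μ r k) (Set.Icc a b) t)^2) +
    ∑ i : Fin n, ∑ j : Fin n,
      if (i : ℕ) < (j : ℕ) then
        (f (trunc (μ t) i j))^2 *
          (∑ l : Fin n, (U t : Matrix (Fin n) (Fin n) ℝ) l i *
            derivWithin (fun r => (U r : Matrix (Fin n) (Fin n) ℝ) l j) (Set.Icc a b) t)^2
      else 0)

lemma flagPieceLen_eq {n : ℕ} (f : (Fin n → ℝ) → ℝ) (a b : ℝ)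
    (μ : ℝ → Fin n → ℝ) (U : ℝ → OG n) :
    flagPieceLen f a b μ U = ∫ t in a..b, pieceIntegrand f a b μ U t := rfl

lemma pieceIntegrand_nonneg {n : ℕ} (f : (Fin n → ℝ) → ℝ) (a b : ℝ)
    (μ : ℝ → Fin n → ℝ) (U : ℝ → OG n) (t : ℝ) : 0 ≤ pieceIntegrand f a b μ U t :=
  Real.sqrt_nonneg _

/-- Continuity on `[a,b]` of the integrand of `flagPieceLen`. -/
lemma integrand_continuousOn {n : ℕ} (f : (Fin n → ℝ) → ℝ)
    (hfc : ContinuousOn f (Set.Icc (0 : Fin n → ℝ) 1))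
    {a b : ℝ} (hab : a < b) {μ : ℝ → Fin n → ℝ}
    (hμmem : ∀ t k, μ t k ∈ Set.Icc (0:ℝ) 1)
    (hμ : ContDiffOn ℝ 1 μ (Set.Icc a b)) {U : ℝ → OG n}
    (hU : ContDiffOn ℝ 1 (fun t k l => ((U t : Matrix (Fin n) (Fin n) ℝ)) k l) (Set.Icc a b)) :
    ContinuousOn (pieceIntegrand f a b μ U) (Set.Icc a b) := by
  have hUD := uniqueDiffOn_Icc hab
  unfold pieceIntegrand
  apply Real.continuous_sqrt.comp_continuousOn
  apply ContinuousOn.add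
  · apply continuousOn_finset_sum
    intro k _
    exact ((contDiffOn_pi.mp hμ k).continuousOn_derivWithin hUD le_rfl).pow 2
  · apply continuousOn_finset_sum
    intro i _
    apply continuousOn_finset_sum
    intro j _
    by_cases hij : (i:ℕ) < (j:ℕ)
    · simp only [if_pos hij]
      apply ContinuousOn.mul
      · apply ContinuousOn.pow
        have hmaps : Set.MapsTo (fun t => trunc (μ t) i j) (Set.Icc a b)
            (Set.Icc (0 : Fin n → ℝ) 1) := fun t _ => trunc_mem_box (hμmem t) i j
        have hcont : ContinuousOn (fun t => trunc (μ t) i j) (Set.Icc a b) := by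
          rw [continuousOn_pi]
          intro l
          unfold trunc
          by_cases hl : (i : ℕ) ≤ (l : ℕ) ∧ (l : ℕ) < (j : ℕ)
          · simp only [if_pos hl]
            exact (contDiffOn_pi.mp hμ l).continuousOn
          · simp only [if_neg hl]
            exact continuousOn_const
        exact hfc.comp hcont hmaps
      · apply ContinuousOn.pow
        apply continuousOn_finset_sum
        intro l _
        exact ((matrix_entry_contOn hU l i).continuousOn).mul
          ((matrix_entry_contOn hU l j).continuousOn_derivWithin hUD le_rfl)
    · simp only [if_neg hij]
      exact continuousOn_const

end Aux2
section Aux3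

set_option maxHeartbeats 2000000 in
lemma piece_approx {n : ℕ} (hn : 0 < n) (f : (Fin n → ℝ) → ℝ) (hf : PinchFun f)
    {a b : ℝ} (hab : a < b) {μ : ℝ → Fin n → ℝ}
    (hμmem : ∀ t k, μ t k ∈ Set.Icc (0:ℝ) 1)
    (hμ : ContDiffOn ℝ 1 μ (Set.Icc a b)) {U : ℝ → OG n}
    (hU : ContDiffOn ℝ 1 (fun t k l => ((U t : Matrix (Fin n) (Fin n) ℝ)) k l) (Set.Icc a b))
    {ε : ℝ} (hε : 0 < ε) :
    ∃ e : ℝ, 0 < e ∧ e * (b - a) ^ 2 ≤ 1 ∧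
      flagPieceLen f a b (pmu a b e μ) U ≤ flagPieceLen f a b μ U + ε := by
  have hSc : IsCompact (Set.Icc a b) := isCompact_Icc
  have hUD := uniqueDiffOn_Icc hab
  have hba0 : (0:ℝ) < b - a := by linarith
  -- uniform bounds on derivatives of weights, entries of U, derivatives of entries of U
  obtain ⟨M, hM0, hM'⟩ := exists_unif_bound hSc
    (fun (k : Fin n) t => derivWithin (fun r => μ r k) (Set.Icc a b) t)
    (fun k => (contDiffOn_pi.mp hμ k).continuousOn_derivWithin hUD le_rfl)
  have hM : ∀ k : Fin n, ∀ t ∈ Set.Icc a b,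
      |derivWithin (fun r => μ r k) (Set.Icc a b) t| ≤ M := hM'
  obtain ⟨MV, hMV0, hMV'⟩ := exists_unif_bound hSc
    (fun (p : Fin n × Fin n) t =>
      derivWithin (fun r => (U r : Matrix (Fin n) (Fin n) ℝ) p.1 p.2) (Set.Icc a b) t)
    (fun p => (matrix_entry_contOn hU p.1 p.2).continuousOn_derivWithin hUD le_rfl)
  have hMV : ∀ l j : Fin n, ∀ t ∈ Set.Icc a b,
      |derivWithin (fun r => (U r : Matrix (Fin n) (Fin n) ℝ) l j) (Set.Icc a b) t| ≤ MV :=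
    fun l j => hMV' (l, j)
  obtain ⟨MU, hMU0, hMU'⟩ := exists_unif_bound hSc
    (fun (p : Fin n × Fin n) t => (U t : Matrix (Fin n) (Fin n) ℝ) p.1 p.2)
    (fun p => (matrix_entry_contOn hU p.1 p.2).continuousOn)
  have hMU : ∀ l i : Fin n, ∀ t ∈ Set.Icc a b,
      |(U t : Matrix (Fin n) (Fin n) ℝ) l i| ≤ MU := fun l i => hMU' (l, i)
  -- bound on f over the unit box
  have hbox : IsCompact (Set.Icc (0 : Fin n → ℝ) 1) := isCompact_Icc
  obtain ⟨F₀, hF₀⟩ := hbox.exists_bound_of_continuousOn hf.1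
  have h0box : (0 : Fin n → ℝ) ∈ Set.Icc (0 : Fin n → ℝ) 1 :=
    Set.left_mem_Icc.mpr zero_le_one
  have hF₀0 : 0 ≤ F₀ := le_trans (norm_nonneg _) (hF₀ 0 h0box)
  have hF₀' : ∀ x ∈ Set.Icc (0 : Fin n → ℝ) 1, |f x| ≤ F₀ := by
    intro x hx; simpa [Real.norm_eq_abs] using hF₀ x hx
  -- constants
  set ρ : ℝ := ε / (b - a) with hρdef
  have hρ0 : 0 < ρ := div_pos hε hba0
  set r : ℝ := ρ ^ 2 with hrdef
  have hr0 : 0 < r := pow_pos hρ0 2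
  set C₁ : ℝ := (b - a) + (b - a)^2 * M with hC₁def
  have hC₁0 : 0 ≤ C₁ := by nlinarith [sq_nonneg (b - a)]
  set C₂ : ℝ := (n : ℝ) * (2 * M * C₁ + C₁^2) with hC₂def
  have hC₂0 : 0 ≤ C₂ :=
    mul_nonneg (Nat.cast_nonneg n)
      (add_nonneg (mul_nonneg (mul_nonneg (by norm_num) hM0) hC₁0) (sq_nonneg _))
  set Kc : ℝ := (n:ℝ)^2 * ((n:ℝ) * MU * MV)^2 with hKcdef
  have hKc0 : 0 ≤ Kc := mul_nonneg (sq_nonneg _) (sq_nonneg _)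
  set η : ℝ := (r/2) / (2*F₀*Kc + 1) with hηdef
  have hP0 : 0 ≤ 2*F₀*Kc := mul_nonneg (mul_nonneg (by norm_num) hF₀0) hKc0
  have hη0 : 0 < η := div_pos (by linarith) (by linarith)
  have hηF : 2*F₀*Kc*η ≤ r/2 := by
    have h1 : (r/2) / (2*F₀*Kc + 1) * (2*F₀*Kc) ≤ r/2 := div_succ_mul_le (by linarith) hP0
    calc 2*F₀*Kc*η = (r/2) / (2*F₀*Kc + 1) * (2*F₀*Kc) := by rw [hηdef]; ring
      _ ≤ r/2 := h1
  -- uniform continuity of f on the box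
  have hfu := hbox.uniformContinuousOn_of_continuous hf.1
  rw [Metric.uniformContinuousOn_iff] at hfu
  obtain ⟨δf, hδf0, hδf⟩ := hfu η hη0
  -- choice of e
  set e : ℝ := min (min 1 (1/((b-a)^2+1)))
      (min ((r/2)/(C₂+1)) ((δf/2)/((b-a)^2+1))) with hedef
  have hsq1 : (0:ℝ) < (b-a)^2 + 1 := by positivity
  have he0 : 0 < e :=
    lt_min (lt_min one_pos (by positivity))
      (lt_min (div_pos (by linarith) (by linarith)) (div_pos (by linarith) hsq1))
  have he_le1 : e ≤ 1 := le_trans (min_le_left _ _) (min_le_left _ _)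
  have heb1 : e * (b-a)^2 ≤ 1 := by
    have h1 : e ≤ 1/((b-a)^2+1) := le_trans (min_le_left _ _) (min_le_right _ _)
    have h2 : e * (b-a)^2 ≤ (1/((b-a)^2+1)) * (b-a)^2 :=
      mul_le_mul_of_nonneg_right h1 (sq_nonneg _)
    have h3 : (1/((b-a)^2+1)) * (b-a)^2 ≤ 1 := by
      rw [div_mul_eq_mul_div, one_mul, div_le_one hsq1]; linarith
    linarith
  have heC₂ : e * C₂ ≤ r/2 := by
    have h1 : e ≤ (r/2)/(C₂+1) := le_trans (min_le_right _ _) (min_le_left _ _)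
    have h2 : e * C₂ ≤ ((r/2)/(C₂+1)) * C₂ := mul_le_mul_of_nonneg_right h1 hC₂0
    have h3 : ((r/2)/(C₂+1)) * C₂ ≤ r/2 := div_succ_mul_le (by linarith) hC₂0
    linarith
  have heδ : e * (b-a)^2 < δf := by
    have h1 : e ≤ (δf/2)/((b-a)^2+1) := le_trans (min_le_right _ _) (min_le_right _ _)
    have h2 : e * (b-a)^2 ≤ ((δf/2)/((b-a)^2+1)) * (b-a)^2 :=
      mul_le_mul_of_nonneg_right h1 (sq_nonneg _)
    have h3 : ((δf/2)/((b-a)^2+1)) * (b-a)^2 ≤ δf/2 := div_succ_mul_le (by linarith) (sq_nonneg _)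
    linarith
  refine ⟨e, he0, heb1, ?_⟩
  -- the perturbed weights stay in the unit box and are C¹
  have hpmem : ∀ t k, pmu a b e μ t k ∈ Set.Icc (0:ℝ) 1 := fun t k =>
    Set.mem_Icc.mpr (pmu_mem_unit hn he0.le heb1 (fun t k => (hμmem t k).1)
      (fun t k => (hμmem t k).2) t k)
  have hpC : ContDiffOn ℝ 1 (pmu a b e μ) (Set.Icc a b) := pmu_contDiffOn hμ
  have hinv01 : (n:ℝ)⁻¹ ∈ Set.Icc (0:ℝ) 1 := by
    constructor
    · positivity
    · rw [inv_le_one_iff₀]; right; exact_mod_cast hn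
  -- the pointwise estimate
  have key : ∀ t ∈ Set.Icc a b,
      pieceIntegrand f a b (pmu a b e μ) U t ≤ pieceIntegrand f a b μ U t + ρ := by
    intro t ht
    have hta : a ≤ t := ht.1
    have htb : t ≤ b := ht.2
    -- derivative of the bump polynomial
    have hq' : HasDerivAt (fun s : ℝ => e * ((s - a)*(b - s))) (e * ((b - t) - (t - a))) t := by
      have h1 : HasDerivAt (fun s : ℝ => (s - a)*(b - s)) (1*(b-t) + (t-a)*(0-1)) t :=
        (((hasDerivAt_id t).sub_const a).mul ((hasDerivAt_const t b).sub (hasDerivAt_id t)))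
      have h2 := h1.const_mul e
      exact h2.congr_deriv (by ring)
    -- the perturbation of the derivative of the weights
    set w : Fin n → ℝ := fun k =>
      (e*((b-t)-(t-a))) * ((n:ℝ)⁻¹ - μ t k)
        - (e*((t-a)*(b-t))) * derivWithin (fun r => μ r k) (Set.Icc a b) t with hwdef
    have hDeriv : ∀ k, derivWithin (fun s => pmu a b e μ s k) (Set.Icc a b) t
        = derivWithin (fun r => μ r k) (Set.Icc a b) t + w k := by
      intro k
      have hEq : Set.EqOn (fun s => pmu a b e μ s k)
          (fun s => μ s k + (e*((s-a)*(b-s))) * ((n:ℝ)⁻¹ - μ s k)) (Set.Icc a b) := by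
        intro s hs
        show pmu a b e μ s k = _
        unfold pmu
        rw [bump_eqOn hs]
        ring
      rw [derivWithin_congr hEq (hEq ht)]
      have hμk : HasDerivWithinAt (fun s => μ s k)
          (derivWithin (fun r => μ r k) (Set.Icc a b) t) (Set.Icc a b) t :=
        (((contDiffOn_pi.mp hμ k).differentiableOn one_ne_zero) t ht).hasDerivWithinAt
      have h2 : HasDerivWithinAt
          (fun s => μ s k + (e*((s-a)*(b-s))) * ((n:ℝ)⁻¹ - μ s k))
          (derivWithin (fun r => μ r k) (Set.Icc a b) t
            + ((e*((b-t)-(t-a))) * ((n:ℝ)⁻¹ - μ t k)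
              + (e*((t-a)*(b-t))) * (0 - derivWithin (fun r => μ r k) (Set.Icc a b) t)))
          (Set.Icc a b) t :=
        hμk.add ((hq'.hasDerivWithinAt).mul
          ((hasDerivWithinAt_const t (Set.Icc a b) ((n:ℝ)⁻¹)).sub hμk))
      rw [h2.derivWithin (hUD t ht), hwdef]
      ring
    have hw : ∀ k, |w k| ≤ e * C₁ := by
      intro k
      have h1 : |e*((b-t)-(t-a))| ≤ e * (b-a) := by
        rw [abs_mul, abs_of_nonneg he0.le]
        apply mul_le_mul_of_nonneg_left _ he0.le
        rw [abs_le]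
        constructor
        · linarith
        · linarith
      have h2 : |(n:ℝ)⁻¹ - μ t k| ≤ 1 := by
        have hm := hμmem t k
        rw [abs_le]
        constructor
        · linarith [hinv01.1, hm.2]
        · linarith [hinv01.2, hm.1]
      have h3 : |e*((t-a)*(b-t))| ≤ e * (b-a)^2 := by
        rw [abs_mul, abs_of_nonneg he0.le]
        apply mul_le_mul_of_nonneg_left _ he0.le
        rw [abs_le]
        have hp : 0 ≤ (t-a)*(b-t) := mul_nonneg (by linarith) (by linarith)
        constructor
        · linarith [sq_nonneg (b-a)]
        · linarith [sq_nonneg (t-a), sq_nonneg (b-t)]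
      have h4 := hM k t ht
      calc |w k| ≤ |e*((b-t)-(t-a)) * ((n:ℝ)⁻¹ - μ t k)|
            + |e*((t-a)*(b-t)) * derivWithin (fun r => μ r k) (Set.Icc a b) t| := by
            rw [hwdef]
            exact abs_sub _ _
        _ = |e*((b-t)-(t-a))| * |(n:ℝ)⁻¹ - μ t k|
            + |e*((t-a)*(b-t))| * |derivWithin (fun r => μ r k) (Set.Icc a b) t| := by
            simp only [abs_mul]
        _ ≤ (e*(b-a)) * 1 + (e*(b-a)^2) * M := by
            apply add_le_add
            · exact mul_le_mul h1 h2 (abs_nonneg _) (mul_nonneg he0.le hba0.le)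
            · exact mul_le_mul h3 h4 (abs_nonneg _) (mul_nonneg he0.le (sq_nonneg _))
        _ = e * C₁ := by rw [hC₁def]; ring
    -- A-part estimate
    have hterm : ∀ k : Fin n,
        |(derivWithin (fun r => μ r k) (Set.Icc a b) t + w k)^2
          - (derivWithin (fun r => μ r k) (Set.Icc a b) t)^2| ≤ e * (2*M*C₁ + C₁^2) := by
      intro k
      have h1 := hw k
      have h2 := hM k t ht
      have hwn := abs_nonneg (w k)
      have hDn := abs_nonneg (derivWithin (fun r => μ r k) (Set.Icc a b) t)
      have hle1 := abs_le.mp h1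
      have hle2 := abs_le.mp h2
      calc |(derivWithin (fun r => μ r k) (Set.Icc a b) t + w k)^2
            - (derivWithin (fun r => μ r k) (Set.Icc a b) t)^2|
          = |2*(derivWithin (fun r => μ r k) (Set.Icc a b) t)*(w k) + (w k)^2| := by
            congr 1; ring
        _ ≤ |2*(derivWithin (fun r => μ r k) (Set.Icc a b) t)*(w k)| + |(w k)^2| := abs_add_le _ _
        _ = 2 * |derivWithin (fun r => μ r k) (Set.Icc a b) t| * |w k| + |w k| ^ 2 := by
            simp only [abs_mul, abs_two, abs_pow]
        _ ≤ 2*M*(e*C₁) + (e*C₁)^2 := by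
            apply add_le_add
            · nlinarith
            · nlinarith
        _ ≤ e * (2*M*C₁ + C₁^2) := by nlinarith
    have hAdiff : |(∑ k : Fin n, (derivWithin (fun s => pmu a b e μ s k) (Set.Icc a b) t)^2)
        - ∑ k : Fin n, (derivWithin (fun r => μ r k) (Set.Icc a b) t)^2| ≤ e * C₂ := by
      have h1 : (∑ k : Fin n, (derivWithin (fun s => pmu a b e μ s k) (Set.Icc a b) t)^2)
          - ∑ k : Fin n, (derivWithin (fun r => μ r k) (Set.Icc a b) t)^2
          = ∑ k : Fin n, ((derivWithin (fun r => μ r k) (Set.Icc a b) t + w k)^2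
            - (derivWithin (fun r => μ r k) (Set.Icc a b) t)^2) := by
        rw [Finset.sum_sub_distrib]
        congr 1
        apply Finset.sum_congr rfl
        intro k _
        rw [hDeriv k]
      rw [h1]
      calc |∑ k : Fin n, ((derivWithin (fun r => μ r k) (Set.Icc a b) t + w k)^2
            - (derivWithin (fun r => μ r k) (Set.Icc a b) t)^2)|
          ≤ ∑ k : Fin n, |(derivWithin (fun r => μ r k) (Set.Icc a b) t + w k)^2
            - (derivWithin (fun r => μ r k) (Set.Icc a b) t)^2| := Finset.abs_sum_le_sum_abs _ _
        _ ≤ ∑ _k : Fin n, e * (2*M*C₁ + C₁^2) := Finset.sum_le_sum (fun k _ => hterm k)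
        _ = (n:ℝ) * (e * (2*M*C₁ + C₁^2)) := by
            rw [Finset.sum_const, Finset.card_univ, Fintype.card_fin, nsmul_eq_mul]
        _ = e * C₂ := by rw [hC₂def]; ring
    -- B-part estimate
    have hκ : ∀ i j : Fin n, |∑ l : Fin n, (U t : Matrix (Fin n) (Fin n) ℝ) l i *
        derivWithin (fun s => (U s : Matrix (Fin n) (Fin n) ℝ) l j) (Set.Icc a b) t|
        ≤ (n:ℝ) * MU * MV := by
      intro i j
      calc |∑ l : Fin n, (U t : Matrix (Fin n) (Fin n) ℝ) l i *
            derivWithin (fun s => (U s : Matrix (Fin n) (Fin n) ℝ) l j) (Set.Icc a b) t|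
          ≤ ∑ l : Fin n, |(U t : Matrix (Fin n) (Fin n) ℝ) l i *
            derivWithin (fun s => (U s : Matrix (Fin n) (Fin n) ℝ) l j) (Set.Icc a b) t| :=
            Finset.abs_sum_le_sum_abs _ _
        _ ≤ ∑ _l : Fin n, MU * MV := by
            apply Finset.sum_le_sum
            intro l _
            rw [abs_mul]
            exact mul_le_mul (hMU l i t ht) (hMV l j t ht) (abs_nonneg _) hMU0
        _ = (n:ℝ) * (MU * MV) := by
            rw [Finset.sum_const, Finset.card_univ, Fintype.card_fin, nsmul_eq_mul]
        _ = (n:ℝ) * MU * MV := by ring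
    have hfdiff : ∀ i j : Fin n,
        |(f (trunc (pmu a b e μ t) i j))^2 - (f (trunc (μ t) i j))^2| ≤ 2*F₀*η := by
      intro i j
      have hx' : trunc (pmu a b e μ t) i j ∈ Set.Icc (0 : Fin n → ℝ) 1 :=
        trunc_mem_box (hpmem t) i j
      have hx : trunc (μ t) i j ∈ Set.Icc (0 : Fin n → ℝ) 1 :=
        trunc_mem_box (hμmem t) i j
      have hdist : dist (trunc (pmu a b e μ t) i j) (trunc (μ t) i j) < δf := by
        rw [dist_pi_lt_iff hδf0]
        intro l
        rw [Real.dist_eq]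
        unfold trunc
        by_cases hl : (i : ℕ) ≤ (l : ℕ) ∧ (l : ℕ) < (j : ℕ)
        · rw [if_pos hl, if_pos hl]
          have hb0 := bump_nonneg (a := a) (b := b) (e := e) t he0.le
          have hb1 : bump a b e t ≤ e * (b-a)^2 := bump_le t he0.le
          have hμt := hμmem t l
          have hdiff : pmu a b e μ t l - μ t l = bump a b e t * ((n:ℝ)⁻¹ - μ t l) := by
            unfold pmu; ring
          rw [hdiff, abs_mul, abs_of_nonneg hb0]
          have h2 : |(n:ℝ)⁻¹ - μ t l| ≤ 1 := by
            rw [abs_le]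
            constructor
            · linarith [hinv01.1, hμt.2]
            · linarith [hinv01.2, hμt.1]
          calc bump a b e t * |(n:ℝ)⁻¹ - μ t l| ≤ bump a b e t * 1 := by nlinarith
            _ ≤ e * (b-a)^2 := by linarith
            _ < δf := heδ
        · rw [if_neg hl, if_neg hl]
          simpa using hδf0
      have hfd := hδf _ hx' _ hx hdist
      rw [Real.dist_eq] at hfd
      have hb1 := hF₀' _ hx'
      have hb2 := hF₀' _ hx
      calc |(f (trunc (pmu a b e μ t) i j))^2 - (f (trunc (μ t) i j))^2|
          = |f (trunc (pmu a b e μ t) i j) - f (trunc (μ t) i j)|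
            * |f (trunc (pmu a b e μ t) i j) + f (trunc (μ t) i j)| := by
            rw [← abs_mul]; congr 1; ring
        _ ≤ η * (2*F₀) := by
            apply mul_le_mul hfd.le _ (abs_nonneg _) (by linarith)
            calc |f (trunc (pmu a b e μ t) i j) + f (trunc (μ t) i j)|
                ≤ |f (trunc (pmu a b e μ t) i j)| + |f (trunc (μ t) i j)| := abs_add_le _ _
              _ ≤ 2*F₀ := by linarith
        _ = 2*F₀*η := by ring
    have hptwise : ∀ i j : Fin n,
        |(if (i : ℕ) < (j : ℕ) then
          (f (trunc (pmu a b e μ t) i j))^2 *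
            (∑ l : Fin n, (U t : Matrix (Fin n) (Fin n) ℝ) l i *
              derivWithin (fun s => (U s : Matrix (Fin n) (Fin n) ℝ) l j) (Set.Icc a b) t)^2
        else 0)
        - (if (i : ℕ) < (j : ℕ) then
          (f (trunc (μ t) i j))^2 *
            (∑ l : Fin n, (U t : Matrix (Fin n) (Fin n) ℝ) l i *
              derivWithin (fun s => (U s : Matrix (Fin n) (Fin n) ℝ) l j) (Set.Icc a b) t)^2
        else 0)| ≤ 2*F₀*η * ((n:ℝ)*MU*MV)^2 := by
      intro i j
      have hprod0 : 0 ≤ 2*F₀*η * ((n:ℝ)*MU*MV)^2 :=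
        mul_nonneg (mul_nonneg (mul_nonneg (by norm_num) hF₀0) hη0.le) (sq_nonneg _)
      by_cases hij : (i:ℕ) < (j:ℕ)
      · rw [if_pos hij, if_pos hij, ← sub_mul, abs_mul]
        have h1 := hfdiff i j
        have h2 := hκ i j
        have hκn := abs_nonneg (∑ l : Fin n, (U t : Matrix (Fin n) (Fin n) ℝ) l i *
          derivWithin (fun s => (U s : Matrix (Fin n) (Fin n) ℝ) l j) (Set.Icc a b) t)
        have h3 : |(∑ l : Fin n, (U t : Matrix (Fin n) (Fin n) ℝ) l i *
            derivWithin (fun s => (U s : Matrix (Fin n) (Fin n) ℝ) l j) (Set.Icc a b) t)^2|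
            ≤ ((n:ℝ)*MU*MV)^2 := by
          rw [abs_pow]
          nlinarith
        exact mul_le_mul h1 h3 (abs_nonneg _)
          (mul_nonneg (mul_nonneg (by norm_num) hF₀0) hη0.le)
      · rw [if_neg hij, if_neg hij]
        simpa using hprod0
    have hBdiff : |(∑ i : Fin n, ∑ j : Fin n,
        if (i : ℕ) < (j : ℕ) then
          (f (trunc (pmu a b e μ t) i j))^2 *
            (∑ l : Fin n, (U t : Matrix (Fin n) (Fin n) ℝ) l i *
              derivWithin (fun s => (U s : Matrix (Fin n) (Fin n) ℝ) l j) (Set.Icc a b) t)^2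
        else 0)
        - ∑ i : Fin n, ∑ j : Fin n,
        if (i : ℕ) < (j : ℕ) then
          (f (trunc (μ t) i j))^2 *
            (∑ l : Fin n, (U t : Matrix (Fin n) (Fin n) ℝ) l i *
              derivWithin (fun s => (U s : Matrix (Fin n) (Fin n) ℝ) l j) (Set.Icc a b) t)^2
        else 0| ≤ 2*F₀*Kc*η := by
      have h1 : ∀ i : Fin n, |∑ j : Fin n,
          ((if (i : ℕ) < (j : ℕ) then
            (f (trunc (pmu a b e μ t) i j))^2 *
              (∑ l : Fin n, (U t : Matrix (Fin n) (Fin n) ℝ) l i *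
                derivWithin (fun s => (U s : Matrix (Fin n) (Fin n) ℝ) l j) (Set.Icc a b) t)^2
          else 0)
          - (if (i : ℕ) < (j : ℕ) then
            (f (trunc (μ t) i j))^2 *
              (∑ l : Fin n, (U t : Matrix (Fin n) (Fin n) ℝ) l i *
                derivWithin (fun s => (U s : Matrix (Fin n) (Fin n) ℝ) l j) (Set.Icc a b) t)^2
          else 0))| ≤ (n:ℝ) * (2*F₀*η * ((n:ℝ)*MU*MV)^2) := by
        intro i
        refine (Finset.abs_sum_le_sum_abs _ _).trans ?_
        refine le_trans (Finset.sum_le_sum fun j _ => hptwise i j) ?_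
        rw [Finset.sum_const, Finset.card_univ, Fintype.card_fin, nsmul_eq_mul]
      rw [← Finset.sum_sub_distrib]
      refine (Finset.abs_sum_le_sum_abs _ _).trans ?_
      have h2 : ∀ i : Fin n, |(∑ j : Fin n,
          if (i : ℕ) < (j : ℕ) then
            (f (trunc (pmu a b e μ t) i j))^2 *
              (∑ l : Fin n, (U t : Matrix (Fin n) (Fin n) ℝ) l i *
                derivWithin (fun s => (U s : Matrix (Fin n) (Fin n) ℝ) l j) (Set.Icc a b) t)^2
          else 0)
          - ∑ j : Fin n,
          if (i : ℕ) < (j : ℕ) then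
            (f (trunc (μ t) i j))^2 *
              (∑ l : Fin n, (U t : Matrix (Fin n) (Fin n) ℝ) l i *
                derivWithin (fun s => (U s : Matrix (Fin n) (Fin n) ℝ) l j) (Set.Icc a b) t)^2
          else 0| ≤ (n:ℝ) * (2*F₀*η * ((n:ℝ)*MU*MV)^2) := by
        intro i
        rw [← Finset.sum_sub_distrib]
        exact h1 i
      refine le_trans (Finset.sum_le_sum fun i _ => h2 i) ?_
      rw [Finset.sum_const, Finset.card_univ, Fintype.card_fin, nsmul_eq_mul]
      apply le_of_eq
      rw [hKcdef]
      ring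
    -- combine
    unfold pieceIntegrand
    have h6 := abs_le.mp hAdiff
    have h7 := abs_le.mp hBdiff
    have h5 : (∑ k : Fin n, (derivWithin (fun r => pmu a b e μ r k) (Set.Icc a b) t)^2) +
        (∑ i : Fin n, ∑ j : Fin n,
          if (i : ℕ) < (j : ℕ) then
            (f (trunc (pmu a b e μ t) i j))^2 *
              (∑ l : Fin n, (U t : Matrix (Fin n) (Fin n) ℝ) l i *
                derivWithin (fun r => (U r : Matrix (Fin n) (Fin n) ℝ) l j) (Set.Icc a b) t)^2
          else 0)
        ≤ ((∑ k : Fin n, (derivWithin (fun r => μ r k) (Set.Icc a b) t)^2) +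
        (∑ i : Fin n, ∑ j : Fin n,
          if (i : ℕ) < (j : ℕ) then
            (f (trunc (μ t) i j))^2 *
              (∑ l : Fin n, (U t : Matrix (Fin n) (Fin n) ℝ) l i *
                derivWithin (fun r => (U r : Matrix (Fin n) (Fin n) ℝ) l j) (Set.Icc a b) t)^2
          else 0)) + r := by
      linarith [heC₂, hηF]
    refine le_trans (Real.sqrt_le_sqrt h5) ?_
    refine le_trans (sqrt_add_le _ r hr0.le) ?_
    have hsr : Real.sqrt r = ρ := by rw [hrdef]; exact Real.sqrt_sq hρ0.le
    rw [hsr]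
  -- integrate the pointwise estimate
  have hIcc : Set.uIcc a b = Set.Icc a b := Set.uIcc_of_le hab.le
  have hInt₀ : IntervalIntegrable (pieceIntegrand f a b μ U) MeasureTheory.volume a b := by
    apply ContinuousOn.intervalIntegrable
    rw [hIcc]
    exact integrand_continuousOn f hf.1 hab hμmem hμ hU
  have hInte : IntervalIntegrable (pieceIntegrand f a b (pmu a b e μ) U)
      MeasureTheory.volume a b := by
    apply ContinuousOn.intervalIntegrable
    rw [hIcc]
    exact integrand_continuousOn f hf.1 hab hpmem hpC hU
  rw [flagPieceLen_eq, flagPieceLen_eq]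
  calc ∫ t in a..b, pieceIntegrand f a b (pmu a b e μ) U t
      ≤ ∫ t in a..b, (pieceIntegrand f a b μ U t + ρ) :=
        intervalIntegral.integral_mono_on hab.le hInte
          (hInt₀.add (intervalIntegrable_const)) key
    _ = (∫ t in a..b, pieceIntegrand f a b μ U t) + (b - a) * ρ := by
        rw [intervalIntegral.integral_add hInt₀ intervalIntegrable_const,
          intervalIntegral.integral_const, smul_eq_mul]
    _ = (∫ t in a..b, pieceIntegrand f a b μ U t) + ε := by
        rw [hρdef]
        field_simp

end Aux3
section Aux4

lemma len_nonneg {n : ℕ} (f : (Fin n → ℝ) → ℝ) (c : WFChain n) (hP : c.Pieces) :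
    0 ≤ c.len f := by
  unfold WFChain.len
  apply Finset.sum_nonneg
  intro i hi
  have hab := hP.2.1 i (Finset.mem_range.mp hi)
  rw [flagPieceLen_eq]
  exact intervalIntegral.integral_nonneg hab.le (fun t _ => Real.sqrt_nonneg _)

/-- Any admissible chain can be approximated, with the same endpoints and arbitrarily
small length increase, by a chain whose open pieces lie in the top cell. -/
lemma approx_chain {n : ℕ} (f : (Fin n → ℝ) → ℝ) (hf : PinchFun f) (c : WFChain n)
    (hP : c.Pieces) {ε : ℝ} (hε : 0 < ε) :
    ∃ c' : WFChain n, c'.Pieces ∧ c'.InteriorTop ∧ c'.src = c.src ∧ c'.tgt = c.tgt ∧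
      c'.len f ≤ c.len f + ε := by
  have hn : 0 < n := del_pos (c.γ 0 0).1
  obtain ⟨h0, hpt, hμC, hUC, hm⟩ := hP
  have hN0 : (0:ℝ) < (c.N : ℝ) := by exact_mod_cast h0
  have key : ∀ i : ℕ, ∃ ei : ℝ, 0 ≤ ei ∧ ei * (c.pt (i+1) - c.pt i)^2 ≤ 1 ∧
      (i < c.N → 0 < ei ∧
        flagPieceLen f (c.pt i) (c.pt (i+1))
          (pmu (c.pt i) (c.pt (i+1)) ei (fun r => ((c.γ i r).1 : Fin n → ℝ)))
          (fun t => (c.γ i t).2)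
        ≤ flagPieceLen f (c.pt i) (c.pt (i+1)) (fun t => ((c.γ i t).1 : Fin n → ℝ))
            (fun t => (c.γ i t).2) + ε / c.N) := by
    intro i
    by_cases hi : i < c.N
    · have hab := hpt i hi
      have hμmem : ∀ t k, ((c.γ i t).1 : Fin n → ℝ) k ∈ Set.Icc (0:ℝ) 1 := fun t k =>
        ⟨(c.γ i t).1.2.1 k, simplex_coord_le_one (c.γ i t).1.2.1 (c.γ i t).1.2.2 k⟩
      have hεN : 0 < ε / c.N := div_pos hε hN0
      obtain ⟨ei, he1, he2, he3⟩ :=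
        piece_approx hn f hf hab hμmem (hμC i hi) (hUC i hi) hεN
      exact ⟨ei, he1.le, he2, fun _ => ⟨he1, he3⟩⟩
    · exact ⟨0, le_refl 0, by norm_num, fun h => absurd h hi⟩
  choose e he0 he1 he2 using key
  have hP' : c.Pieces := ⟨h0, hpt, hμC, hUC, hm⟩
  refine ⟨perturb hn c e he0 he1, perturb_pieces hn c e he0 he1 hP',
    perturb_interiorTop hn c e he0 he1 (fun i hi => (he2 i hi).1),
    perturb_src hn c e he0 he1, perturb_tgt hn c e he0 he1 h0, ?_⟩
  rw [perturb_len]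
  have hclen : c.len f = ∑ i ∈ Finset.range c.N,
      flagPieceLen f (c.pt i) (c.pt (i + 1)) (fun t => ((c.γ i t).1 : Fin n → ℝ))
        (fun t => (c.γ i t).2) := rfl
  rw [hclen]
  calc ∑ i ∈ Finset.range c.N,
      flagPieceLen f (c.pt i) (c.pt (i + 1))
        (pmu (c.pt i) (c.pt (i+1)) (e i) (fun r => ((c.γ i r).1 : Fin n → ℝ)))
        (fun t => (c.γ i t).2)
      ≤ ∑ i ∈ Finset.range c.N,
        (flagPieceLen f (c.pt i) (c.pt (i + 1)) (fun t => ((c.γ i t).1 : Fin n → ℝ))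
          (fun t => (c.γ i t).2) + ε / c.N) :=
      Finset.sum_le_sum (fun i hi => (he2 i (Finset.mem_range.mp hi)).2)
    _ = (∑ i ∈ Finset.range c.N,
        flagPieceLen f (c.pt i) (c.pt (i + 1)) (fun t => ((c.γ i t).1 : Fin n → ℝ))
          (fun t => (c.γ i t).2)) + (c.N : ℝ) * (ε / c.N) := by
        rw [Finset.sum_add_distrib, Finset.sum_const, Finset.card_range, nsmul_eq_mul]
    _ = (∑ i ∈ Finset.range c.N,
        flagPieceLen f (c.pt i) (c.pt (i + 1)) (fun t => ((c.γ i t).1 : Fin n → ℝ))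
          (fun t => (c.γ i t).2)) + ε := by
        congr 1
        field_simp

end Aux4
/-- **The length structure `L_{WF}` extends `L_{M̄}` and induces the same distance**
(Proposition `prop:xdMxdWF`): every Definition-I piecewise `C¹` path (open pieces in
the top cell `M(n)`) is a Definition-II piecewise `C¹` path (pieces in the closure of
a single elementary cell `M(|K|;K)`) with the same length — so the admissible lengths
for `L_{M̄}` are among those for `L_{WF}` — and the induced distances coincide:
`d_{WF} = d_{M̄}` on `WF(n)`. -/
theorem LWF_extends_LM_and_dWF_eq_dM {n : ℕ} (f : (Fin n → ℝ) → ℝ) (hf : PinchFun f) :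
    (∀ x y : WF n, lensM f x y ⊆ lensWF f x y) ∧
    (∀ x y : WF n, dWF f x y = dM f x y) := by
  have part1 : ∀ x y : WF n, lensM f x y ⊆ lensWF f x y := by
    intro x y L hL
    obtain ⟨c, hP, hT, hs, ht, hlen⟩ := hL
    refine ⟨c, hP, ?_, hs, ht, hlen⟩
    intro i hi
    have hn : 0 < n := del_pos (c.γ 0 0).1
    have : Nonempty (Fin n) := ⟨⟨0, hn⟩⟩
    refine ⟨Finset.univ, Finset.univ_nonempty,
      fun t ht' k => ⟨fun _ => Finset.mem_univ k, fun _ => hT i hi t ht' k⟩,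
      fun t ht' k hk => absurd (Finset.mem_univ k) hk⟩
  refine ⟨part1, fun x y => ?_⟩
  by_cases hW : (lensWF f x y).Nonempty
  · have hbddM : BddBelow (lensM f x y) := by
      refine ⟨0, fun L hL => ?_⟩
      obtain ⟨c, hP, _, _, _, rfl⟩ := hL
      exact len_nonneg f c hP
    have hbddW : BddBelow (lensWF f x y) := by
      refine ⟨0, fun L hL => ?_⟩
      obtain ⟨c, hP, _, _, _, rfl⟩ := hL
      exact len_nonneg f c hP
    have hM : (lensM f x y).Nonempty := by
      obtain ⟨L, c, hP, hC, hs, ht, rfl⟩ := hW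
      obtain ⟨c', hP', hT', hs', ht', _⟩ := approx_chain f hf c hP one_pos
      exact ⟨c'.len f, c', hP', hT', hs'.trans hs, ht'.trans ht, rfl⟩
    apply le_antisymm
    · exact csInf_le_csInf hbddW hM (part1 x y)
    · apply le_csInf hW
      intro L hL
      obtain ⟨c, hP, hC, hs, ht, rfl⟩ := hL
      apply le_of_forall_pos_le_add
      intro ε hε
      obtain ⟨c', hP', hT', hs', ht', hlen⟩ := approx_chain f hf c hP hε
      have hmem : c'.len f ∈ lensM f x y := ⟨c', hP', hT', hs'.trans hs, ht'.trans ht, rfl⟩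
      exact (csInf_le hbddM hmem).trans hlen
  · rw [Set.not_nonempty_iff_eq_empty] at hW
    have hM : lensM f x y = ∅ := Set.eq_empty_of_subset_empty (hW ▸ part1 x y)
    unfold dWF dM
    rw [hW, hM]
end
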